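/- arXiv:2605.03151 — 2 statements merged into one kernel-verified Lean document; each statement's English description precedes it below -/
import Mathlib

section
/- Let (X_n)_{n≥1} be a sequence of random finite d-dimensional simplicial complexes with s_{d−1}(X_n) → ∞, converging locally weakly in probability to (X, o) with law μ. Set ζ := μ( s_{d−1}(C(o)) = ∞ ), the survival probability of the d-dimensional connected component of the root. Then for every ε > 0, P( s_{d−1}(C_max) ≤ s_{d−1}(X_n)·(ζ + ε) ) → 1 as n → ∞. -/
open MeasureTheory Filter Finset Asymptotics
open scoped ENNReal NNReal Classical

namespace RSC

/-- An abstract simplicial complex on a vertex type `V`: a collection of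
nonempty finite sets closed under taking nonempty subsets. -/
structure SComplex (V : Type*) where
  faces : Set (Finset V)
  nonempty_of_mem : ∀ σ ∈ faces, σ.Nonempty
  down_closed : ∀ σ ∈ faces, ∀ τ : Finset V, τ ⊆ σ → τ.Nonempty → τ ∈ faces

variable {V W : Type*}

/-- The set of `k`-dimensional simplices (sets of cardinality `k+1`). -/
def simplices (X : SComplex V) (k : ℕ) : Set (Finset V) :=
  {σ | σ ∈ X.faces ∧ σ.card = k + 1}

/-- `s_k(X)`, the number of `k`-dimensional simplices. -/
noncomputable def scount (X : SComplex V) (k : ℕ) : ℕ :=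
  (simplices X k).ncard

/-- Two `(d-1)`-simplices are adjacent if some `d`-simplex contains both. -/
def Adj (X : SComplex V) (d : ℕ) (σ σ' : Finset V) : Prop :=
  σ ∈ simplices X (d - 1) ∧ σ' ∈ simplices X (d - 1) ∧
    ∃ τ ∈ simplices X d, σ ⊆ τ ∧ σ' ⊆ τ

/-- `d`-dimensional connectivity of `(d-1)`-simplices (connection through
`d`-dimensional paths). -/
def Conn (X : SComplex V) (d : ℕ) (σ σ' : Finset V) : Prop :=
  σ ∈ simplices X (d - 1) ∧ σ' ∈ simplices X (d - 1) ∧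
    Relation.ReflTransGen (Adj X d) σ σ'

/-- The `d`-dimensional connected component of a `(d-1)`-simplex, as the set of
`(d-1)`-simplices connected to it. -/
def component (X : SComplex V) (d : ℕ) (σ : Finset V) : Set (Finset V) :=
  {σ' | Conn X d σ σ'}

/-- The collection of `d`-dimensional connected components. -/
def components (X : SComplex V) (d : ℕ) : Set (Set (Finset V)) :=
  {C | ∃ σ ∈ simplices X (d - 1), C = component X d σ}

/-- `s_{d-1}(C_max)`: the number of `(d-1)`-simplices of the largest
`d`-dimensional connected component. -/
noncomputable def maxCompCard (X : SComplex V) (d : ℕ) : ℕ :=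
  sSup (Set.ncard '' components X d)

/-- `s_{d-1}(C_(2))`: the number of `(d-1)`-simplices of the second largest
`d`-dimensional connected component. -/
noncomputable def secondCompCard (X : SComplex V) (d : ℕ) : ℕ :=
  sSup {m | ∃ C₁ ∈ components X d, ∃ C₂ ∈ components X d,
    C₁ ≠ C₂ ∧ m = min C₁.ncard C₂.ncard}

/-- `C` is a largest `d`-dimensional connected component. -/
def IsMaxComponent (X : SComplex V) (d : ℕ) (C : Set (Finset V)) : Prop :=
  C ∈ components X d ∧ ∀ C' ∈ components X d, C'.ncard ≤ C.ncard

/-- `C` is a second largest `d`-dimensional connected component (with respect to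
some choice of a largest component, ties broken arbitrarily). -/
def IsSecondComponent (X : SComplex V) (d : ℕ) (C : Set (Finset V)) : Prop :=
  ∃ C₀, IsMaxComponent X d C₀ ∧ C ∈ components X d ∧ C ≠ C₀ ∧
    ∀ C' ∈ components X d, C' ≠ C₀ → C'.ncard ≤ C.ncard

/-- `s_0(C)`: the number of vertices contained in simplices of a component `C`. -/
noncomputable def vertexCard (C : Set (Finset V)) : ℕ :=
  (⋃ σ ∈ C, (σ : Set V)).ncard

/-! ### Neighborhoods -/

/-- The faces of the radius-`r` neighborhood of a `(d-1)`-simplex `σ₀`,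
with respect to `d`-dimensional adjacency. -/
def ballFaces (X : SComplex V) (d : ℕ) (σ₀ : Finset V) : ℕ → Set (Finset V)
  | 0 => {ρ | ρ ⊆ σ₀ ∧ ρ.Nonempty}
  | r + 1 => ballFaces X d σ₀ r ∪
      {ρ | ρ.Nonempty ∧ ∃ τ ∈ simplices X d,
        (∃ σ ∈ simplices X (d - 1), σ ∈ ballFaces X d σ₀ r ∧ σ ⊆ τ) ∧ ρ ⊆ τ}

lemma ballFaces_down (X : SComplex V) (d : ℕ) (σ₀ : Finset V) :
    ∀ r, ∀ ρ ∈ ballFaces X d σ₀ r, ∀ π : Finset V, π ⊆ ρ → π.Nonempty →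
      π ∈ ballFaces X d σ₀ r := by
  intro r
  induction r with
  | zero =>
    rintro ρ ⟨h1, -⟩ π hsub hne
    exact ⟨hsub.trans h1, hne⟩
  | succ r ih =>
    rintro ρ (h | ⟨-, τ, hτ, hσ, hρτ⟩) π hsub hne
    · exact Or.inl (ih ρ h π hsub hne)
    · exact Or.inr ⟨hne, τ, hτ, hσ, hsub.trans hρτ⟩

/-- The radius-`r` neighborhood `B_X(σ₀; r)` of a `(d-1)`-simplex `σ₀`,
as a simplicial complex. -/
def ball (X : SComplex V) (d : ℕ) (σ₀ : Finset V) (r : ℕ) : SComplex V where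
  faces := X.faces ∩ ballFaces X d σ₀ r
  nonempty_of_mem := fun σ h => X.nonempty_of_mem σ h.1
  down_closed := fun σ h τ hsub hne =>
    ⟨X.down_closed σ h.1 τ hsub hne, ballFaces_down X d σ₀ r σ h.2 τ hsub hne⟩

/-! ### Rooted complexes and isomorphisms -/

/-- A rooted simplicial complex. -/
structure Rooted (V : Type*) where
  cplx : SComplex V
  root : Finset V

/-- Isomorphism of rooted simplicial complexes: a bijection of vertex sets
preserving all simplices and mapping root to root. -/
def Iso (A : Rooted V) (B : Rooted W) : Prop :=
  ∃ φ : V → W, Set.InjOn φ {v | ({v} : Finset V) ∈ A.cplx.faces} ∧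
    (∀ σ ∈ A.cplx.faces, σ.image φ ∈ B.cplx.faces) ∧
    (∀ τ ∈ B.cplx.faces, ∃ σ ∈ A.cplx.faces, σ.image φ = τ) ∧
    A.root.image φ = B.root

/-- The rooted radius-`r` neighborhood of the root of a rooted complex. -/
def ballOf (A : Rooted V) (d : ℕ) (r : ℕ) : Rooted V :=
  ⟨ball A.cplx d A.root r, A.root⟩

/-! ### Local weak convergence in probability -/

/-- Local weak convergence in probability of a sequence of random finite
`d`-dimensional simplicial complexes to a random `(d-1)`-rooted simplicial
complex `Y` defined on a probability space `(Ω', ν)`. -/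
def ConvLWCinP {Ω : ℕ → Type*} [∀ n, MeasurableSpace (Ω n)]
    (μ : ∀ n, Measure (Ω n)) {Vn : ℕ → Type*}
    (X : ∀ n, Ω n → SComplex (Vn n)) (d : ℕ)
    {Ω' : Type*} [MeasurableSpace Ω'] (ν : Measure Ω') (Y : Ω' → Rooted ℕ) : Prop :=
  ∀ (r : ℕ) (H : Rooted ℕ), ∀ ε > (0 : ℝ),
    Tendsto (fun n => ((μ n) {ω |
        ε < |(Set.ncard {σ | σ ∈ simplices (X n ω) (d - 1) ∧
                Iso (ballOf ⟨X n ω, σ⟩ d r) H} : ℝ) / (scount (X n ω) (d - 1) : ℝ)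
              - (ν {ω' | Iso (ballOf (Y ω') d r) H}).toReal|}).toReal)
      atTop (nhds 0)

/-! ### The multi-parameter random simplicial complex -/

/-- Bernoulli measure with success probability `p` on `Bool`. -/
noncomputable def bern (p : ℝ) : Measure Bool :=
  (PMF.bernoulli (min (Real.toNNReal p) 1) (min_le_right _ _)).toMeasure

instance (p : ℝ) : IsProbabilityMeasure (bern p) :=
  PMF.toMeasure.isProbabilityMeasure _

/-- The law of the independent coins deciding the presence of simplices:
the coin of a potential `k`-dimensional simplex `σ` (with `σ.card = k+1`)
has success probability `p k`. -/
noncomputable def coinMeasure (n : ℕ) (p : ℕ → ℝ) :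
    Measure (Finset (Fin n) → Bool) :=
  Measure.pi fun σ => bern (p (σ.card - 1))

instance (n : ℕ) (p : ℕ → ℝ) : IsProbabilityMeasure (coinMeasure n p) := by
  unfold coinMeasure; infer_instance

/-- The multi-parameter random simplicial complex `MRSC_d(n; p)` built from
the independent coins `ω`: a simplex of dimension `≤ d` is present iff the
coins of all its faces of dimension `≥ 1` are successes. -/
noncomputable def mrscComplex (d n : ℕ) (ω : Finset (Fin n) → Bool) :
    SComplex (Fin n) where
  faces := {σ | σ.Nonempty ∧ σ.card ≤ d + 1 ∧ ∀ τ ⊆ σ, 2 ≤ τ.card → ω τ = true}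
  nonempty_of_mem := fun _ h => h.1
  down_closed := fun _ h _ hsub hne =>
    ⟨hne, le_trans (Finset.card_le_card hsub) h.2.1,
      fun ρ hρ h2 => h.2.2 ρ (hρ.trans hsub) h2⟩

/-- Parameters of the Linial–Meshulam complex `LM_d(n, lam/n)` seen as a
multi-parameter random simplicial complex. -/
noncomputable def lmParam (d : ℕ) (lam : ℝ) (n : ℕ) : ℕ → ℝ :=
  fun k => if k = d then lam / n else 1

/-- Parameters of `MRSC_2(n; p₁, p₂)`. -/
noncomputable def mrsc2Param (p₁ p₂ : ℕ → ℝ) (n : ℕ) : ℕ → ℝ :=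
  fun k => if k = 1 then p₁ n else if k = 2 then p₂ n else 1

/-- `q_d`, the probability that a fixed `(d-1)`-simplex is present. -/
noncomputable def qParam (d : ℕ) (p : ℕ → ℝ) : ℝ :=
  ∏ k ∈ Finset.Icc 1 (d - 1), p k ^ d.choose (k + 1)

/-- `r_d`, the conditional probability that a fixed `d`-simplex containing a
present `(d-1)`-simplex is present. -/
noncomputable def rParam (d : ℕ) (p : ℕ → ℝ) : ℝ :=
  ∏ k ∈ Finset.Icc 1 d, p k ^ d.choose k

/-- Conditional probability `P(A | B)`. -/
noncomputable def condProb {Ω : Type*} [MeasurableSpace Ω]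
    (μ : Measure Ω) (A B : Set Ω) : ℝ :=
  (μ (A ∩ B)).toReal / (μ B).toReal

/-- `I_lam = lam - 1 - log lam`, the large deviation rate function of the
Poisson distribution. -/
noncomputable def Ifun (lam : ℝ) : ℝ := lam - 1 - Real.log lam

/-- `γ_lam`: the smallest solution in `[0,1]` of `γ = exp (-lam (1 - γ^d))`,
i.e. the extinction probability of a branching process with offspring
distribution `d · Poi(lam)`. -/
noncomputable def gammaLam (d : ℕ) (lam : ℝ) : ℝ :=
  sInf {γ : ℝ | γ ∈ Set.Icc (0 : ℝ) 1 ∧ γ = Real.exp (-lam * (1 - γ ^ d))}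


/-! ### Breadth-first exploration -/

/-- Insert an element into a list sorted according to `key`. -/
def insertKey {α : Type*} (key : α → ℕ) (a : α) : List α → List α
  | [] => [a]
  | b :: t => if key a ≤ key b then a :: b :: t else b :: insertKey key a t

/-- Sort a list according to an injective key (a fixed linear order). -/
def sortByKey {α : Type*} (key : α → ℕ) (l : List α) : List α :=
  l.foldr (insertKey key) []

/-- One step of the breadth-first exploration of a `d`-dimensional connected
component.  A state consists of the set of faces discovered so far together
with the queue of active `(d-1)`-simplices; at each step the first active
`(d-1)`-simplex is explored: all new `d`-simplices containing it (and whose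
new vertices avoid `avoid`) are detected, their faces are added to the
discovered set, and the newly detected `(d-1)`-simplices are appended
(in the fixed linear order given by `key`) to the queue. -/
noncomputable def exploreStep [Fintype V] [DecidableEq V] (key : Finset V → ℕ)
    (X : SComplex V) (d : ℕ) (avoid : Set V) :
    Set (Finset V) × List (Finset V) → Set (Finset V) × List (Finset V)
  | (vis, []) => (vis, [])
  | (vis, σ :: rest) =>
    let newTri : Set (Finset V) :=
      {τ | τ ∈ X.faces ∧ τ.card = d + 1 ∧ σ ⊆ τ ∧ τ ∉ vis ∧
        ∀ v ∈ τ, v ∉ σ → v ∉ avoid}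
    let vis' := vis ∪ {ρ | ρ.Nonempty ∧ ∃ τ ∈ newTri, ρ ⊆ τ}
    let newAct : Finset (Finset V) :=
      Finset.univ.filter fun σ' => σ'.card = d ∧ σ' ∉ vis ∧ ∃ τ ∈ newTri, σ' ⊆ τ
    (vis', rest ++ sortByKey key newAct.toList)

/-- The breadth-first exploration started from a given initial state. -/
noncomputable def exploreFrom [Fintype V] [DecidableEq V] (key : Finset V → ℕ)
    (X : SComplex V) (d : ℕ) (avoid : Set V)
    (init : Set (Finset V) × List (Finset V)) (k : ℕ) :
    Set (Finset V) × List (Finset V) :=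
  (exploreStep key X d avoid)^[k] init

/-- The breadth-first exploration of the `d`-dimensional connected component of
the `(d-1)`-simplex `σ₀`; `(explore key X d σ₀ k).1` is the complex `𝒳_k`
discovered after `k` steps and `(explore key X d σ₀ k).2` is the queue of
active `(d-1)`-simplices. -/
noncomputable def explore [Fintype V] [DecidableEq V] (key : Finset V → ℕ)
    (X : SComplex V) (d : ℕ) (σ₀ : Finset V) (k : ℕ) :
    Set (Finset V) × List (Finset V) :=
  exploreFrom key X d ∅ ({ρ | ρ ⊆ σ₀ ∧ ρ.Nonempty}, [σ₀]) k

/-- Number of edges (`(d-1)=1`-simplices when `d = 2`) in the ball `B_X(σ; r)`;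
more generally the number of `(d-1)`-simplices. -/
noncomputable def ballEdgeCount (X : SComplex V) (d : ℕ) (σ : Finset V) (r : ℕ) : ℕ :=
  Set.ncard {τ | τ ∈ (ball X d σ r).faces ∧ τ.card = d}

/-- Number of `(d-1)`-simplices in the boundary `∂B_X(σ; r)`. -/
noncomputable def bdryEdgeCount (X : SComplex V) (d : ℕ) (σ : Finset V) (r : ℕ) : ℕ :=
  Set.ncard {τ | τ ∈ (ball X d σ r).faces ∧ τ.card = d ∧
    τ ∉ (ball X d σ (r - 1)).faces}

/-- The vertex set of the ball `B_X(σ; r)`. -/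
def ballVerts (X : SComplex V) (d : ℕ) (σ : Finset V) (r : ℕ) : Set V :=
  {v | ({v} : Finset V) ∈ (ball X d σ r).faces}

/-- The breadth-first exploration started from the ball `B_X(σ₀; r)` fully
explored, with the `(d-1)`-simplices of its boundary active, avoiding the
vertex set `avoid`. -/
noncomputable def exploreBall [Fintype V] [DecidableEq V] (key : Finset V → ℕ)
    (X : SComplex V) (d : ℕ) (avoid : Set V) (σ₀ : Finset V) (r k : ℕ) :
    Set (Finset V) × List (Finset V) :=
  exploreFrom key X d avoid
    ((ball X d σ₀ r).faces,
      sortByKey key ((Finset.univ.filter fun τ : Finset V =>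
        τ.card = d ∧ τ ∈ (ball X d σ₀ r).faces ∧
          τ ∉ (ball X d σ₀ (r - 1)).faces).toList)) k

/-- `deg_{c-1, m}^T (ρ)`: the number of `m`-dimensional simplices
(sets of cardinality `m+1`) in the collection `T` containing `ρ`. -/
noncomputable def degIn (T : Set (Finset V)) (ρ : Finset V) (m : ℕ) : ℕ :=
  Set.ncard {τ | τ ∈ T ∧ τ.card = m + 1 ∧ ρ ⊆ τ}

/-- `max_{ρ ∈ S_{c-1}(T)} deg_{c-1, m}^T (ρ)`. -/
noncomputable def maxDegIn (T : Set (Finset V)) (c m : ℕ) : ℕ :=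
  sSup ((fun ρ => degIn T ρ m) '' {ρ | ρ ∈ T ∧ ρ.card = c})

/-- `s_0(T)`: the number of vertices of the collection of faces `T`. -/
noncomputable def vertsOf (T : Set (Finset V)) : ℕ :=
  Set.ncard {v : V | ({v} : Finset V) ∈ T}

/-- The canonical face `{0, …, c-1}` in `Fin n`. -/
def canonFace (n c : ℕ) : Finset (Fin n) :=
  Finset.univ.filter fun i => (i : ℕ) < c

/-- The canonical `ℓ`-dimensional face `{0, …, ℓ-1, d}` in `Fin n`;
it is contained in the canonical `d`-simplex but not in the canonical
`(d-1)`-simplex. -/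
def canonRho (n ℓ d : ℕ) : Finset (Fin n) :=
  Finset.univ.filter fun i => (i : ℕ) < ℓ ∨ (i : ℕ) = d

/-- `p_{d,ℓ} = P(τ ∈ X_n | σ, ρ ∈ X_n)` for simplices `τ, σ, ρ` of dimensions
`d`, `d-1` and `ℓ` respectively with `σ, ρ ⊆ τ` and `ρ ⊄ σ`. -/
noncomputable def pdl (d n : ℕ) (p : ℕ → ℝ) (ℓ : ℕ) : ℝ :=
  condProb (coinMeasure n p)
    {ω | canonFace n (d + 1) ∈ (mrscComplex d n ω).faces}
    {ω | canonFace n d ∈ (mrscComplex d n ω).faces ∧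
         canonRho n ℓ d ∈ (mrscComplex d n ω).faces}

/-- The quantity `p_k^F` of Lemma 3.2 (forward estimate), with `e` the `o(1)`
error term. -/
noncomputable def pkFval (d n : ℕ) (p : ℕ → ℝ) (lam e : ℝ) (k : ℕ)
    (T : Set (Finset (Fin n))) (σk : Finset (Fin n)) : ℝ :=
  (1 - ((k : ℝ) - 1) * lam / n -
      ∑ ℓ ∈ Finset.Icc 1 (d - 1),
        ∑ ρ ∈ σk.powerset.filter (fun ρ => ρ.card = ℓ),
          (degIn T ρ (d - 1) : ℝ) * pdl d n p ℓ) * (lam / n + e)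

/-- The quantity `p_k^B` of Lemma 3.3 (backward estimate), with `e` the `o(1)`
error term. -/
noncomputable def pkBval (d n : ℕ) (p : ℕ → ℝ) (lam e : ℝ)
    (T : Set (Finset (Fin n))) (σk : Finset (Fin n)) : ℝ :=
  (1 - ∑ ℓ ∈ Finset.Icc 1 (d - 1),
        ∑ ρ ∈ σk.powerset.filter (fun ρ => ρ.card = ℓ),
          (degIn T ρ (d - 1) : ℝ) * pdl d n p ℓ) * (lam / n + e)

/-- `F_k`: `d` times the number of forward `d`-simplices detected when
exploring `σk` from the state with discovered faces `T`, i.e. the number of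
new forward `(d-1)`-simplices. -/
noncomputable def forwardCount (d n : ℕ) (Xc : SComplex (Fin n))
    (T : Set (Finset (Fin n))) (σk : Finset (Fin n)) : ℕ :=
  d * Set.ncard {v : Fin n | ({v} : Finset (Fin n)) ∉ T ∧
    insert v σk ∈ Xc.faces}

/-- `B_k`: `d` times the number of backward `d`-simplices detected when
exploring `σk` from the state with discovered faces `T`, i.e. the number of
new backward `(d-1)`-simplices. -/
noncomputable def backwardCount (d n : ℕ) (Xc : SComplex (Fin n))
    (T : Set (Finset (Fin n))) (σk : Finset (Fin n)) : ℕ :=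
  d * Set.ncard {v : Fin n | ({v} : Finset (Fin n)) ∈ T ∧ v ∉ σk ∧
    (∀ ρ : Finset (Fin n), ρ ⊆ insert v σk → ρ.card = d → v ∈ ρ → ρ ∉ T) ∧
    insert v σk ∈ Xc.faces}

/-- The probability `P(Bin(m, q) = j)`. -/
noncomputable def binomPMF (m : ℕ) (q : ℝ) (j : ℕ) : ℝ :=
  m.choose j * q ^ j * (1 - q) ^ (m - j)

/-- The upper tail `P(d · Bin(m, q) ≥ t)` of `d` times a binomial random
variable. -/
noncomputable def scaledBinomTail (d m : ℕ) (q : ℝ) (t : ℕ) : ℝ :=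
  ∑ j ∈ Finset.range (m + 1), if t ≤ d * j then binomPMF m q j else 0

/-! ### The `(d-1)`-rooted Poisson tree and Galton–Watson trees -/

/-- The fresh vertex attached to the tree node encoded by `l`. -/
def apex (d : ℕ) (l : List ℕ) : ℕ := d + Encodable.encode l

/-- The `(d-1)`-simplex of the node of the `(d-1)`-rooted tree indexed by
the path `l` (most recent step first): the root is `{0, …, d-1}` and the node
`c :: l` is obtained from the node `l` by attaching the fresh vertex
`apex d (c / d :: l)` of its `(c / d)`-th child `d`-simplex and removing its
`(c % d)`-th smallest vertex. -/
def nodeSimplex (d : ℕ) : List ℕ → Finset ℕ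
  | [] => Finset.range d
  | c :: l =>
    ((nodeSimplex d l).erase (((nodeSimplex d l).sort (· ≤ ·)).getD (c % d) 0))
      ∪ {apex d (c / d :: l)}

/-- Which nodes are present, given the number `N l` of child `d`-simplices of
every node `l`: each child `d`-simplex carries `d` child `(d-1)`-simplices. -/
def nodePresent (d : ℕ) (N : List ℕ → ℕ) : List ℕ → Prop
  | [] => True
  | c :: l => nodePresent d N l ∧ c < d * N l

/-- The `(d-1)`-rooted tree complex built from the family of offspring numbers
`N`: when every `N l` is an independent `Poisson(lam)` random variable this is
the `(d-1)`-rooted Poisson tree with parameter `lam`. -/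
def poissonTreeComplex (d : ℕ) (N : List ℕ → ℕ) : SComplex ℕ where
  faces := {ρ | ρ.Nonempty ∧ (ρ ⊆ Finset.range d ∨
    ∃ l i, nodePresent d N l ∧ i < N l ∧
      ρ ⊆ nodeSimplex d l ∪ {apex d (i :: l)})}
  nonempty_of_mem := fun _ h => h.1
  down_closed := by
    rintro σ ⟨h1, h2⟩ τ hsub hne
    refine ⟨hne, ?_⟩
    rcases h2 with h | ⟨l, i, h3, h4, h5⟩
    · exact Or.inl (hsub.trans h)
    · exact Or.inr ⟨l, i, h3, h4, hsub.trans h5⟩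

/-- The `(d-1)`-rooted Poisson tree (as a rooted complex) built from the
offspring numbers `N`. -/
def poissonTreeRooted (d : ℕ) (N : List ℕ → ℕ) : Rooted ℕ :=
  ⟨poissonTreeComplex d N, Finset.range d⟩

/-- The Poisson probability mass function `e^{-lam} lam^m / m!`. -/
noncomputable def poiPMF (lam : ℝ) (m : ℕ) : ℝ :=
  Real.exp (-lam) * lam ^ m / (Nat.factorial m)

/-- The probability mass function of `d` times a `Poisson(lam)` random
variable. -/
noncomputable def dPoiPMF (d : ℕ) (lam : ℝ) (m : ℕ) : ℝ :=
  if d ∣ m then Real.exp (-lam) * lam ^ (m / d) / (Nat.factorial (m / d)) else 0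

/-- The family tree of a Galton–Watson branching process whose individuals `l`
have `N l` children: the set of individuals ever produced. -/
def gwTree (N : List ℕ → ℕ) : Set (List ℕ) :=
  {l | nodePresent 1 N l}

/-- The restricted generating function
`G(z) = E[z^C · 1_{C < ∞}]` of the total progeny `C` of the Galton–Watson
process with offspring numbers `N`. -/
noncomputable def gwGen {Ω : Type*} [MeasurableSpace Ω] (μ : Measure Ω)
    (N : Ω → List ℕ → ℕ) (z : ℝ) : ℝ :=
  ∫ ω, (if (gwTree (N ω)).Finite then z ^ (gwTree (N ω)).ncard else 0) ∂μ

/-- `1 / s_{d-1}(C(o))` for a rooted complex, with the convention that it is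
`0` for an infinite component. -/
noncomputable def invCompCard (d : ℕ) (A : Rooted ℕ) : ℝ :=
  if (component A.cplx d A.root).Finite then
    1 / ((component A.cplx d A.root).ncard : ℝ) else 0

/-! ### The metric space of rooted complexes -/

/-- `X` is locally finite above dimension `d-1`: every simplex of dimension
`≥ d-1` (cardinality `≥ d`) is contained in finitely many simplices of the
next dimension. -/
def LocallyFinite (X : SComplex V) (d : ℕ) : Prop :=
  ∀ σ ∈ X.faces, d ≤ σ.card →
    {τ | τ ∈ X.faces ∧ σ ⊆ τ ∧ τ.card = σ.card + 1}.Finite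

/-- `X` is `d`-dimensionally connected: every pair of `(d-1)`-simplices is
joined by a `d`-dimensional path, and every face is contained in some
`(d-1)`-simplex. -/
def DConnected (X : SComplex V) (d : ℕ) : Prop :=
  (∀ σ ∈ simplices X (d - 1), ∀ σ' ∈ simplices X (d - 1), Conn X d σ σ') ∧
    ∀ ρ ∈ X.faces, ∃ σ ∈ simplices X (d - 1), ρ ⊆ σ

/-- A member of the space `S_{d-1}`: a `(d-1)`-rooted, `d`-dimensionally
connected simplicial complex that is locally finite above dimension `d-1`. -/
def GoodRooted (d : ℕ) (A : Rooted ℕ) : Prop :=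
  A.root ∈ simplices A.cplx (d - 1) ∧ LocallyFinite A.cplx d ∧
    DConnected A.cplx d

/-- The local distance `1 / (1 + R*)` on rooted simplicial complexes, where
`R* = sup {R | B(σ₁; R) ≅ B(σ₂; R)}` (the distance being `0` if all
neighborhoods are isomorphic). -/
noncomputable def rdist (d : ℕ) (A B : Rooted ℕ) : ℝ :=
  if ∀ R : ℕ, Iso (ballOf A d R) (ballOf B d R) then 0
  else
    1 / (1 + ((sSup {R : ℕ | Iso (ballOf A d R) (ballOf B d R)} : ℕ) : ℝ))



/- Let `ζ = P(|C(o)| = ∞)`. The root of the limit is almost surely a `(d-1)`-simplex, so with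
probability about `1 - ζ` its component is finite, of size `< K` for a suitable `K`. That event
is a countable union of isomorphism classes of `K`-balls, finitely many of which already carry
mass `> 1 - ζ - ε/2`. By local convergence, with high probability a `1 - ζ - ε` fraction of the
`(d-1)`-simplices of `X_n` have their `K`-ball in one of these classes, and then their component
has fewer than `K ≤ ε s_{d-1}(X_n)` simplices: a `K`-ball with fewer than `K` simplices has
stopped growing, so it contains the whole component. A component with at least `K` simplices
avoids all of them, hence has at most `(ζ + ε) s_{d-1}(X_n)` simplices. -/

lemma exists_transversal {α : Type*} {s : Set α} {r : α → α → Prop} (hrefl : ∀ x ∈ s, r x x)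
    (hsymm : ∀ x ∈ s, ∀ y ∈ s, r x y → r y x)
    (htrans : ∀ x ∈ s, ∀ y ∈ s, ∀ z ∈ s, r x y → r y z → r x z) :
    ∃ t ⊆ s, (∀ x ∈ s, ∃ y ∈ t, r x y) ∧ ∀ x ∈ t, ∀ y ∈ t, r x y → x = y := by
  let S : Setoid s := ⟨fun x y => r x y, ⟨fun x => hrefl x x.2,
    fun {x y} => hsymm x x.2 y y.2, fun {x y z} => htrans x x.2 y y.2 z z.2⟩⟩
  refine ⟨Set.range fun q : Quotient S => (q.out : α), ?_, fun x hx => ?_, ?_⟩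
  · rintro _ ⟨q, rfl⟩
    exact q.out.2
  · have hx' : r _ x := Quotient.mk_out (s := S) ⟨x, hx⟩
    exact ⟨_, ⟨⟦⟨x, hx⟩⟧, rfl⟩, hsymm _ (Quotient.out (s := S) ⟦⟨x, hx⟩⟧).2 x hx hx'⟩
  · rintro _ ⟨q, rfl⟩ _ ⟨q', rfl⟩ h
    rw [← q.out_eq, ← q'.out_eq, Quotient.sound (s := S) h]

lemma exists_eq_succ_of_monotone_of_ncard_lt {α : Type*} {f : ℕ → Set α} (hf : Monotone f)
    {K : ℕ} (hfin : (f K).Finite) (hlt : (f K).ncard < K) : ∃ r < K, f r = f (r + 1) := by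
  by_contra! hne
  have hgrow : ∀ r ≤ K, r ≤ (f r).ncard := by
    intro r
    induction r with
    | zero => exact fun _ => Nat.zero_le _
    | succ r ih =>
      intro hrK
      have hss : f r ⊂ f (r + 1) := (hf r.le_succ).ssubset_of_ne (hne r (by omega))
      exact (ih (by omega)).trans_lt (Set.ncard_lt_ncard hss (hfin.subset (hf hrK)))
  exact (hgrow K le_rfl).not_gt hlt

lemma exists_finset_lt_sum_measure {α ι : Type*} [MeasurableSpace α] {μ : Measure α}
    {T : Set ι} (hT : T.Countable) {C : ι → Set α} {a : ℝ≥0∞} (ha : a < μ (⋃ i ∈ T, C i)) :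
    ∃ F : Finset ι, ↑F ⊆ T ∧ a < ∑ i ∈ F, μ (C i) := by
  have hlt := ha.trans_le (measure_biUnion_le μ hT C)
  rw [ENNReal.tsum_eq_iSup_sum] at hlt
  obtain ⟨F, hF⟩ := lt_iSup_iff.1 hlt
  refine ⟨F.map (Function.Embedding.subtype _), fun i hi => ?_, by rwa [Finset.sum_map]⟩
  obtain ⟨j, -, rfl⟩ := Finset.mem_map.1 hi
  exact j.2

lemma one_le_toReal_measure_add_not {α : Type*} [MeasurableSpace α] (ν : Measure α)
    [IsProbabilityMeasure ν] (p : α → Prop) :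
    1 ≤ (ν {x | p x}).toReal + (ν {x | ¬ p x}).toReal := by
  have h := measure_union_le (μ := ν) {x | p x} {x | ¬ p x}
  rw [show {x | p x} ∪ {x | ¬ p x} = Set.univ from Set.eq_univ_of_forall fun x => em (p x),
    measure_univ] at h
  rw [← ENNReal.toReal_add (measure_ne_top _ _) (measure_ne_top _ _)]
  exact (ENNReal.toReal_mono (by finiteness) h).trans_eq' ENNReal.toReal_one.symm

lemma sub_card_mul_le_sum_of_abs_sub_le {ι : Type*} (F : Finset ι) {f g : ι → ℝ} {δ : ℝ}
    (h : ∀ i ∈ F, |f i - g i| ≤ δ) : ∑ i ∈ F, g i - F.card * δ ≤ ∑ i ∈ F, f i := by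
  rw [← nsmul_eq_mul, ← Finset.sum_const, ← Finset.sum_sub_distrib]
  exact Finset.sum_le_sum fun i hi => by linarith [(abs_le.1 (h i hi)).1]

/-- Squeeze `P(T)` between `P(G) - ∑ P(Eᵢ)` and `1`. -/
lemma tendsto_measure_of_diff_subset {Ω : ℕ → Type*} [∀ n, MeasurableSpace (Ω n)]
    {μ : ∀ n, Measure (Ω n)} [∀ n, IsProbabilityMeasure (μ n)] {ι : Type*} (F : Finset ι)
    {G T : ∀ n, Set (Ω n)} {E : ι → ∀ n, Set (Ω n)}
    (hG : Tendsto (fun n => (μ n (G n)).toReal) atTop (nhds 1))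
    (hE : ∀ i ∈ F, Tendsto (fun n => (μ n (E i n)).toReal) atTop (nhds 0))
    (hsub : ∀ n, G n \ ⋃ i ∈ F, E i n ⊆ T n) :
    Tendsto (fun n => (μ n (T n)).toReal) atTop (nhds 1) := by
  have hle : ∀ n, (μ n (G n)).toReal - ∑ i ∈ F, (μ n (E i n)).toReal ≤ (μ n (T n)).toReal := by
    intro n
    have hG : μ n (G n) ≤ μ n (T n) + ∑ i ∈ F, μ n (E i n) := calc
      μ n (G n) ≤ μ n (T n ∪ ⋃ i ∈ F, E i n) :=
        measure_mono fun ω hω => (em _).elim Or.inr fun h => Or.inl (hsub n ⟨hω, h⟩)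
      _ ≤ μ n (T n) + μ n (⋃ i ∈ F, E i n) := measure_union_le _ _
      _ ≤ μ n (T n) + ∑ i ∈ F, μ n (E i n) := by gcongr; exact measure_biUnion_finset_le _ _
    have := ENNReal.toReal_mono (by simp [measure_ne_top]) hG
    rw [ENNReal.toReal_add (measure_ne_top _ _)
      (ENNReal.sum_ne_top.2 fun _ _ => measure_ne_top _ _),
      ENNReal.toReal_sum fun _ _ => measure_ne_top _ _] at this
    linarith
  refine tendsto_of_tendsto_of_tendsto_of_le_of_le ?_ tendsto_const_nhds hle
    fun n => measureReal_le_one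
  simpa using hG.sub (tendsto_finsetSum F hE)

namespace SComplex

def verts (X : SComplex V) : Set V := {v | ({v} : Finset V) ∈ X.faces}

lemma coe_subset_verts (X : SComplex V) {σ : Finset V} (hσ : σ ∈ X.faces) :
    (σ : Set V) ⊆ X.verts := fun v hv =>
  X.down_closed σ hσ {v} (Finset.singleton_subset_iff.2 hv) (Finset.singleton_nonempty v)

lemma ext_faces {X Y : SComplex V} (h : X.faces = Y.faces) : X = Y := by
  cases X; cases Y; congr

end SComplex

section Connectivity

variable {X : SComplex V} {d : ℕ} {σ σ' σ'' : Finset V}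

lemma Adj.symm (h : Adj X d σ σ') : Adj X d σ' σ :=
  ⟨h.2.1, h.1, h.2.2.imp fun _ hτ => ⟨hτ.1, hτ.2.2, hτ.2.1⟩⟩

lemma Conn.refl (h : σ ∈ simplices X (d - 1)) : Conn X d σ σ := ⟨h, h, .refl⟩

lemma Conn.trans (h : Conn X d σ σ') (h' : Conn X d σ' σ'') : Conn X d σ σ'' :=
  ⟨h.1, h'.2.1, h.2.2.trans h'.2.2⟩

lemma Conn.symm (h : Conn X d σ σ') : Conn X d σ' σ :=
  ⟨h.2.1, h.1, Relation.ReflTransGen.mono (fun _ _ hh => Adj.symm hh) _ _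
    (Relation.ReflTransGen.swap _ _ h.2.2)⟩

lemma Conn.tail (h : Conn X d σ σ') (h' : Adj X d σ' σ'') : Conn X d σ σ'' :=
  ⟨h.1, h'.2.1, h.2.2.tail h'⟩

lemma component_subset_simplices : component X d σ ⊆ simplices X (d - 1) := fun _ h => h.2.1

lemma component_eq_of_mem (h : σ' ∈ component X d σ) : component X d σ' = component X d σ :=
  Set.ext fun _ => ⟨h.trans, h.symm.trans⟩

end Connectivity

section Balls

variable {X : SComplex V} {d : ℕ} {σ₀ : Finset V}

lemma ballFaces_mono (X : SComplex V) (d : ℕ) (σ₀ : Finset V) : Monotone (ballFaces X d σ₀) :=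
  monotone_nat_of_le_succ fun _ _ h => Or.inl h

lemma mem_simplices_ball {r k : ℕ} {ρ : Finset V} :
    ρ ∈ simplices (ball X d σ₀ r) k ↔ ρ ∈ simplices X k ∧ ρ ∈ ballFaces X d σ₀ r :=
  ⟨fun h => ⟨⟨h.1.1, h.2⟩, h.1.2⟩, fun h => ⟨⟨h.1.1, h.2⟩, h.1.2⟩⟩

lemma simplices_ball_mono (X : SComplex V) (d : ℕ) (σ₀ : Finset V) (k : ℕ) :
    Monotone fun r => simplices (ball X d σ₀ r) k := fun _ _ hrr' _ hρ =>
  mem_simplices_ball.2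
    ⟨(mem_simplices_ball.1 hρ).1, ballFaces_mono X d σ₀ hrr' (mem_simplices_ball.1 hρ).2⟩

lemma root_mem_simplices_ball {k : ℕ} (hσ₀ : σ₀ ∈ simplices X k) (r : ℕ) :
    σ₀ ∈ simplices (ball X d σ₀ r) k :=
  mem_simplices_ball.2 ⟨hσ₀, ballFaces_mono X d σ₀ r.zero_le
    ⟨subset_rfl, X.nonempty_of_mem σ₀ hσ₀.1⟩⟩

lemma component_ball_subset {r : ℕ} : component (ball X d σ₀ r) d σ₀ ⊆ component X d σ₀ := by
  have hsimp : ∀ {k ρ}, ρ ∈ simplices (ball X d σ₀ r) k → ρ ∈ simplices X k :=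
    fun h => (mem_simplices_ball.1 h).1
  rintro σ ⟨h₀, hσ, hpath⟩
  refine ⟨hsimp h₀, hsimp hσ, Relation.ReflTransGen.mono ?_ _ _ hpath⟩
  rintro _ _ ⟨h₁, h₂, τ, hτ, hs⟩
  exact ⟨hsimp h₁, hsimp h₂, τ, hsimp hτ, hs⟩

lemma simplices_ball_subset_component_ball (hσ₀ : σ₀ ∈ simplices X (d - 1)) {r K : ℕ}
    (hrK : r ≤ K) : simplices (ball X d σ₀ r) (d - 1) ⊆ component (ball X d σ₀ K) d σ₀ := by
  induction r with
  | zero =>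
    intro τ hτ
    have hτσ₀ : τ = σ₀ := Finset.eq_of_subset_of_card_le (mem_simplices_ball.1 hτ).2.1
      (by rw [hτ.2, hσ₀.2])
    subst hτσ₀
    exact Conn.refl (root_mem_simplices_ball hσ₀ K)
  | succ r ih =>
    intro τ hτ
    obtain ⟨hτX, hτr | ⟨-, τ', hτ', ⟨σ, hσ, hσr, hστ'⟩, hττ'⟩⟩ := mem_simplices_ball.1 hτ
    · exact ih (by omega) (mem_simplices_ball.2 ⟨hτX, hτr⟩)
    · have hball : ∀ {k ρ}, ρ ∈ simplices X k → ρ ∈ ballFaces X d σ₀ (r + 1) →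
          ρ ∈ simplices (ball X d σ₀ K) k :=
        fun h h' => mem_simplices_ball.2 ⟨h, ballFaces_mono X d σ₀ hrK h'⟩
      refine (ih (by omega) (mem_simplices_ball.2 ⟨hσ, hσr⟩)).tail
        ⟨hball hσ (Or.inl hσr), hball hτX hτ.1.2, τ', hball hτ' ?_, hστ', hττ'⟩
      exact Or.inr ⟨X.nonempty_of_mem τ' hτ'.1, τ', hτ', ⟨σ, hσ, hσr, hστ'⟩, subset_rfl⟩

lemma simplices_ball_subset_component (hσ₀ : σ₀ ∈ simplices X (d - 1)) (r : ℕ) :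
    simplices (ball X d σ₀ r) (d - 1) ⊆ component X d σ₀ :=
  (simplices_ball_subset_component_ball hσ₀ le_rfl).trans component_ball_subset

lemma component_subset_simplices_ball_of_eq_succ (hσ₀ : σ₀ ∈ simplices X (d - 1)) {r : ℕ}
    (hstab : simplices (ball X d σ₀ r) (d - 1) = simplices (ball X d σ₀ (r + 1)) (d - 1)) :
    component X d σ₀ ⊆ simplices (ball X d σ₀ r) (d - 1) := by
  rintro σ' ⟨-, -, hpath⟩
  induction hpath with
  | refl => exact root_mem_simplices_ball hσ₀ r
  | tail _ hadj ih =>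
    obtain ⟨hb, hc, τ, hτ, hbτ, hcτ⟩ := hadj
    rw [hstab]
    exact mem_simplices_ball.2 ⟨hc, Or.inr ⟨X.nonempty_of_mem _ hc.1, τ, hτ,
      ⟨_, hb, (mem_simplices_ball.1 ih).2, hbτ⟩, hcτ⟩⟩

lemma component_finite_ncard_lt (hσ₀ : σ₀ ∈ simplices X (d - 1)) {K : ℕ}
    (hfin : (simplices (ball X d σ₀ K) (d - 1)).Finite)
    (hlt : (simplices (ball X d σ₀ K) (d - 1)).ncard < K) :
    (component X d σ₀).Finite ∧ (component X d σ₀).ncard < K := by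
  obtain ⟨r, hrK, hstab⟩ :=
    exists_eq_succ_of_monotone_of_ncard_lt (simplices_ball_mono X d σ₀ (d - 1)) hfin hlt
  have hsub : component X d σ₀ ⊆ simplices (ball X d σ₀ K) (d - 1) :=
    (component_subset_simplices_ball_of_eq_succ hσ₀ hstab).trans
      (simplices_ball_mono X d σ₀ _ hrK.le)
  exact ⟨hfin.subset hsub, (Set.ncard_le_ncard hsub hfin).trans_lt hlt⟩

lemma exists_mem_simplices_pred_of_mem (Z : SComplex V) {τ : Finset V} (hτ : τ ∈ simplices Z d)
    {v : V} (hv : v ∈ τ) : ∃ ρ ∈ simplices Z (d - 1), v ∈ ρ ∧ ρ ⊆ τ := by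
  obtain ⟨ρ, hvρ, hρτ, hcard⟩ := Finset.exists_subsuperset_card_eq
    (Finset.singleton_subset_iff.2 hv) (by simp) (by rw [hτ.2]; omega : d - 1 + 1 ≤ τ.card)
  exact ⟨ρ, ⟨Z.down_closed τ hτ.1 ρ hρτ ⟨v, Finset.singleton_subset_iff.1 hvρ⟩, hcard⟩,
    Finset.singleton_subset_iff.1 hvρ, hρτ⟩

lemma subset_root_or_exists_simplex_ball {r : ℕ} {ρ : Finset V} (hρ : ρ ∈ ballFaces X d σ₀ r) :
    ρ ⊆ σ₀ ∨ ∃ τ ∈ simplices (ball X d σ₀ r) d, ρ ⊆ τ := by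
  induction r with
  | zero => exact Or.inl hρ.1
  | succ r ih =>
    rcases hρ with hρ | ⟨-, τ, hτ, hσ, hρτ⟩
    · exact (ih hρ).imp_right fun ⟨τ, hτ, hρτ⟩ =>
        ⟨τ, simplices_ball_mono X d σ₀ d r.le_succ hτ, hρτ⟩
    · exact Or.inr ⟨τ, mem_simplices_ball.2
        ⟨hτ, Or.inr ⟨X.nonempty_of_mem τ hτ.1, τ, hτ, hσ, subset_rfl⟩⟩, hρτ⟩

/-- Every face of a ball lies on the vertices of `σ₀` and of the component of `σ₀`. -/
lemma ball_faces_finite (hσ₀ : σ₀ ∈ simplices X (d - 1)) (hc : (component X d σ₀).Finite)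
    (r : ℕ) : (ball X d σ₀ r).faces.Finite := by
  set S : Set V := ↑σ₀ ∪ ⋃ ρ ∈ component X d σ₀, (ρ : Set V)
  have hS : S.Finite := σ₀.finite_toSet.union (hc.biUnion fun ρ _ => ρ.finite_toSet)
  refine (hS.finite_subsets.preimage Finset.coe_injective.injOn).subset ?_
  intro ρ hρ v hv
  rcases subset_root_or_exists_simplex_ball hρ.2 with hρσ₀ | ⟨τ, hτ, hρτ⟩
  · exact Or.inl (hρσ₀ hv)
  · obtain ⟨c, hcτ, hvc, -⟩ := exists_mem_simplices_pred_of_mem _ hτ (hρτ hv)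
    exact Or.inr (Set.mem_biUnion (simplices_ball_subset_component hσ₀ r hcτ) hvc)

end Balls

section Isomorphisms

variable {U : Type*} {A : Rooted V} {B : Rooted W}

lemma Iso.refl (A : Rooted V) : Iso A A :=
  ⟨id, Set.injOn_id _, fun σ hσ => by simpa using hσ, fun τ hτ => ⟨τ, hτ, by simp⟩, by simp⟩

lemma Iso.trans {C : Rooted U} (h₁ : Iso A B) (h₂ : Iso B C) : Iso A C := by
  obtain ⟨φ, hinj, hmap, hsurj, hrt⟩ := h₁
  obtain ⟨φ', hinj', hmap', hsurj', hrt'⟩ := h₂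
  refine ⟨φ' ∘ φ, hinj'.comp hinj fun v hv => ?_, fun σ hσ => ?_, fun τ hτ => ?_, ?_⟩
  · simpa using hmap {v} hv
  · rw [← Finset.image_image]
    exact hmap' _ (hmap σ hσ)
  · obtain ⟨σ', hσ', rfl⟩ := hsurj' τ hτ
    obtain ⟨σ, hσ, rfl⟩ := hsurj σ' hσ'
    exact ⟨σ, hσ, Finset.image_image.symm⟩
  · rw [← Finset.image_image, hrt, hrt']

lemma Iso.symm (h : Iso A B) (hroot : A.root ∈ A.cplx.faces) : Iso B A := by
  obtain ⟨φ, hinj, hmap, hsurj, hrt⟩ := h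
  have : Nonempty V := (A.cplx.nonempty_of_mem _ hroot).to_subtype.map Subtype.val
  set ψ := Function.invFunOn φ A.cplx.verts
  have hψφ : ∀ σ ∈ A.cplx.faces, (σ.image φ).image ψ = σ := fun σ hσ => by
    rw [Finset.image_image]
    exact (Finset.image_congr fun v hv =>
      hinj.leftInvOn_invFunOn (A.cplx.coe_subset_verts hσ hv)).trans Finset.image_id'
  have hφψ : ∀ w ∈ B.cplx.verts, ∃ v ∈ A.cplx.verts, φ v = w := by
    intro w hw
    obtain ⟨σ, hσ, hσw⟩ := hsurj {w} hw
    obtain ⟨v, hv⟩ := A.cplx.nonempty_of_mem σ hσ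
    refine ⟨v, A.cplx.coe_subset_verts hσ hv, Finset.mem_singleton.1 ?_⟩
    exact hσw ▸ Finset.mem_image_of_mem φ hv
  refine ⟨ψ, fun w hw w' hw' heq => ?_, fun τ hτ => ?_,
    fun σ hσ => ⟨σ.image φ, hmap σ hσ, hψφ σ hσ⟩, by rw [← hrt, hψφ _ hroot]⟩
  · rw [← Function.invFunOn_eq (hφψ w hw), ← Function.invFunOn_eq (hφψ w' hw')]
    exact congrArg φ heq
  · obtain ⟨σ, hσ, rfl⟩ := hsurj τ hτ
    rwa [hψφ σ hσ]

lemma image_mem_simplices {X : SComplex V} {Z : SComplex W} {φ : V → W}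
    (hinj : Set.InjOn φ X.verts) (hmap : ∀ σ ∈ X.faces, σ.image φ ∈ Z.faces) {k : ℕ}
    {σ : Finset V} (hσ : σ ∈ simplices X k) : σ.image φ ∈ simplices Z k :=
  ⟨hmap σ hσ.1, by rw [Finset.card_image_of_injOn (hinj.mono (X.coe_subset_verts hσ.1)), hσ.2]⟩

lemma Iso.root_mem_simplices (h : Iso A B) {k : ℕ} (hA : A.root ∈ simplices A.cplx k) :
    B.root ∈ simplices B.cplx k := by
  obtain ⟨φ, hinj, hmap, -, hrt⟩ := h
  exact hrt ▸ image_mem_simplices hinj hmap hA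

lemma Iso.exists_injOn_component (h : Iso A B) (d : ℕ) :
    ∃ f : Finset V → Finset W,
      Set.MapsTo f (component A.cplx d A.root) (component B.cplx d B.root) ∧
        Set.InjOn f (component A.cplx d A.root) := by
  obtain ⟨φ, hinj, hmap, -, hrt⟩ := h
  have hsimp : ∀ {k σ}, σ ∈ simplices A.cplx k → σ.image φ ∈ simplices B.cplx k :=
    image_mem_simplices hinj hmap
  refine ⟨Finset.image φ, ?_, fun σ hσ σ' hσ' heq => ?_⟩
  · rintro σ ⟨h₀, hσ, hpath⟩
    rw [← hrt]
    refine ⟨hsimp h₀, hsimp hσ, hpath.lift _ ?_⟩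
    rintro _ _ ⟨h₁, h₂, τ, hτ, h₁τ, h₂τ⟩
    exact ⟨hsimp h₁, hsimp h₂, _, hsimp hτ, Finset.image_subset_image h₁τ,
      Finset.image_subset_image h₂τ⟩
  · refine Finset.coe_injective ((hinj.image_eq_image_iff (A.cplx.coe_subset_verts hσ.2.1.1)
      (A.cplx.coe_subset_verts hσ'.2.1.1)).1 ?_)
    simpa only [Finset.coe_image] using congrArg ((↑) : Finset W → Set W) heq

lemma Iso.component_finite_ncard_le (h : Iso A B) {d : ℕ}
    (hfin : (component B.cplx d B.root).Finite) :
    (component A.cplx d A.root).Finite ∧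
      (component A.cplx d A.root).ncard ≤ (component B.cplx d B.root).ncard := by
  obtain ⟨f, hf, hinj⟩ := h.exists_injOn_component d
  exact ⟨.of_finite_image (hfin.subset hf.image_subset) hinj,
    Set.ncard_le_ncard_of_injOn f hf hinj hfin⟩

end Isomorphisms

/-- Up to isomorphism, the radius-`K` balls around roots whose component has fewer than `K`
simplices; finiteness of the faces makes this set countable. -/
def smallRooted (d K : ℕ) : Set (Rooted ℕ) :=
  {H | H.root ∈ simplices H.cplx (d - 1) ∧ H.cplx.faces.Finite ∧
    (component H.cplx d H.root).ncard < K}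

lemma countable_setOf_faces_finite : {H : Rooted ℕ | H.cplx.faces.Finite}.Countable := by
  have hinj : Function.Injective fun H : Rooted ℕ => (H.cplx.faces, H.root) := by
    rintro ⟨X, σ⟩ ⟨X', σ'⟩ h
    obtain ⟨hX, hσ⟩ := Prod.ext_iff.1 h
    rw [SComplex.ext_faces (X := X) hX, show σ = σ' from hσ]
  refine ((Set.countable_ofPred_finite_subset Set.countable_univ).prod
    Set.countable_univ).preimage hinj |>.mono fun H hH => ?_
  exact ⟨⟨hH, Set.subset_univ _⟩, Set.mem_univ _⟩

lemma countable_smallRooted (d K : ℕ) : (smallRooted d K).Countable :=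
  countable_setOf_faces_finite.mono fun _ hH => hH.2.1

lemma ballOf_mem_smallRooted {d K : ℕ} {A : Rooted ℕ} (hroot : A.root ∈ simplices A.cplx (d - 1))
    (hfin : (component A.cplx d A.root).Finite) (hlt : (component A.cplx d A.root).ncard < K) :
    ballOf A d K ∈ smallRooted d K :=
  ⟨root_mem_simplices_ball hroot K, ball_faces_finite hroot hfin K,
    (Set.ncard_le_ncard component_ball_subset hfin).trans_lt hlt⟩

lemma component_finite_ncard_lt_of_iso {X : SComplex V} {d K : ℕ} {σ : Finset V}
    (hσ : σ ∈ simplices X (d - 1)) {H : Rooted ℕ} (hH : H ∈ smallRooted d K)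
    (hiso : Iso (ballOf ⟨X, σ⟩ d K) H) :
    (component X d σ).Finite ∧ (component X d σ).ncard < K := by
  obtain ⟨hfin, hle⟩ := hiso.component_finite_ncard_le (hH.2.1.subset fun _ h => h.2.1.1)
  have hsub := simplices_ball_subset_component_ball hσ (le_refl K)
  exact component_finite_ncard_lt hσ (hfin.subset hsub)
    ((Set.ncard_le_ncard hsub hfin).trans_lt (hle.trans_lt hH.2.2))

section Counting

variable {X : SComplex V} {d : ℕ}

lemma simplices_finite (hfin : X.faces.Finite) (k : ℕ) : (simplices X k).Finite :=
  hfin.subset fun _ h => h.1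

lemma maxCompCard_le_scount (hfin : X.faces.Finite) : maxCompCard X d ≤ scount X (d - 1) := by
  refine csSup_le' ?_
  rintro _ ⟨C, ⟨σ, -, rfl⟩, rfl⟩
  exact Set.ncard_le_ncard component_subset_simplices (simplices_finite hfin _)

lemma maxCompCard_le_mul_of_one_le (hfin : X.faces.Finite) {c : ℝ} (hc : 1 ≤ c) :
    (maxCompCard X d : ℝ) ≤ scount X (d - 1) * c := by
  have hM : (maxCompCard X d : ℝ) ≤ scount X (d - 1) := by
    exact_mod_cast maxCompCard_le_scount hfin
  exact hM.trans (le_mul_of_one_le_right (Nat.cast_nonneg _) hc)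

lemma exists_ncard_component_eq_maxCompCard (hfin : X.faces.Finite)
    (hne : (simplices X (d - 1)).Nonempty) :
    ∃ σ ∈ simplices X (d - 1), (component X d σ).ncard = maxCompCard X d := by
  have hcomps : components X d = component X d '' simplices X (d - 1) := by
    ext C
    exact ⟨fun ⟨σ, hσ, hC⟩ => ⟨σ, hσ, hC.symm⟩, fun ⟨σ, hσ, hC⟩ => ⟨σ, hσ, hC.symm⟩⟩
  rw [maxCompCard, hcomps]
  obtain ⟨_, ⟨σ, hσ, rfl⟩, hσmax⟩ := Nat.sSup_mem ((hne.image _).image _)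
    (((simplices_finite hfin _).image _).image _).bddAbove
  exact ⟨σ, hσ, hσmax⟩

/-- A largest component, once it has at least `K` simplices, avoids all simplices whose
component has fewer than `K`. -/
lemma maxCompCard_add_ncard_small_le (hfin : X.faces.Finite) {K : ℕ}
    (hK : K ≤ maxCompCard X d) :
    maxCompCard X d + {σ | σ ∈ simplices X (d - 1) ∧ (component X d σ).ncard < K}.ncard ≤
      scount X (d - 1) := by
  set A := {σ | σ ∈ simplices X (d - 1) ∧ (component X d σ).ncard < K}
  rcases (simplices X (d - 1)).eq_empty_or_nonempty with hemp | hne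
  · have hA : A = ∅ := Set.eq_empty_of_subset_empty fun σ hσ => hemp ▸ hσ.1
    simpa [hA] using maxCompCard_le_scount (d := d) hfin
  obtain ⟨σ₀, -, hσ₀⟩ := exists_ncard_component_eq_maxCompCard hfin hne
  have hdisj : Disjoint (component X d σ₀) A := Set.disjoint_left.2 fun σ hσ hσA => by
    have := hσA.2
    rw [component_eq_of_mem hσ, hσ₀] at this
    omega
  have hsimp := simplices_finite hfin (d - 1)
  rw [← hσ₀, ← Set.ncard_union_eq hdisj (hsimp.subset component_subset_simplices)
    (hsimp.subset fun _ h => h.1)]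
  exact Set.ncard_le_ncard (Set.union_subset component_subset_simplices fun _ h => h.1) hsimp

lemma sum_ncard_iso_le_ncard_small (hfin : X.faces.Finite) {K : ℕ} {F : Finset (Rooted ℕ)}
    (hF : ∀ H ∈ F, H ∈ smallRooted d K) (hdistinct : ∀ H₁ ∈ F, ∀ H₂ ∈ F, Iso H₁ H₂ → H₁ = H₂) :
    ∑ H ∈ F, {σ | σ ∈ simplices X (d - 1) ∧ Iso (ballOf ⟨X, σ⟩ d K) H}.ncard ≤
      {σ | σ ∈ simplices X (d - 1) ∧ (component X d σ).ncard < K}.ncard := by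
  set cls := fun H => {σ | σ ∈ simplices X (d - 1) ∧ Iso (ballOf ⟨X, σ⟩ d K) H}
  have hsimp := simplices_finite hfin (d - 1)
  have hdisj : (F : Set (Rooted ℕ)).PairwiseDisjoint cls := by
    intro H₁ h₁ H₂ h₂ hne
    refine Set.disjoint_left.2 fun σ ⟨hσ, hiso₁⟩ ⟨_, hiso₂⟩ => hne ?_
    exact hdistinct H₁ h₁ H₂ h₂ ((hiso₁.symm (root_mem_simplices_ball hσ K).1).trans hiso₂)
  rw [← finsum_mem_coe_finset, ← Set.Finite.ncard_biUnion F.finite_toSet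
    (fun _ _ => hsimp.subset fun _ h => h.1) hdisj]
  refine Set.ncard_le_ncard (Set.iUnion₂_subset fun H hH σ hσ => ⟨hσ.1, ?_⟩)
    (hsimp.subset fun _ h => h.1)
  exact (component_finite_ncard_lt_of_iso hσ.1 (hF H hH) hσ.2).2

lemma maxCompCard_le_of_sum_le (hfin : X.faces.Finite) {K : ℕ} {F : Finset (Rooted ℕ)}
    (hF : ∀ H ∈ F, H ∈ smallRooted d K) (hdistinct : ∀ H₁ ∈ F, ∀ H₂ ∈ F, Iso H₁ H₂ → H₁ = H₂)
    {z ε : ℝ} (hz : 0 ≤ z) (hK : (K : ℝ) ≤ scount X (d - 1) * ε)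
    (hsum : 1 - z - ε ≤ ∑ H ∈ F,
      ({σ | σ ∈ simplices X (d - 1) ∧ Iso (ballOf ⟨X, σ⟩ d K) H}.ncard : ℝ) /
        scount X (d - 1)) :
    (maxCompCard X d : ℝ) ≤ scount X (d - 1) * (z + ε) := by
  set s := scount X (d - 1)
  set A := {σ | σ ∈ simplices X (d - 1) ∧ (component X d σ).ncard < K}
  have hA : (1 - z - ε) * s ≤ A.ncard := by
    rw [← Finset.sum_div] at hsum
    have hcount : (∑ H ∈ F, ({σ | σ ∈ simplices X (d - 1) ∧
        Iso (ballOf ⟨X, σ⟩ d K) H}.ncard : ℝ)) ≤ A.ncard := by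
      exact_mod_cast sum_ncard_iso_le_ncard_small hfin hF hdistinct
    rcases (Nat.cast_nonneg (α := ℝ) s).eq_or_lt with hs | hs
    · rw [← hs, mul_zero]
      positivity
    · exact ((le_div_iff₀ hs).1 hsum).trans hcount
  have hsz : 0 ≤ (s : ℝ) * z := by positivity
  rcases lt_or_ge (maxCompCard X d) K with hlt | hge
  · have : (maxCompCard X d : ℝ) < K := by exact_mod_cast hlt
    linarith
  · have : (maxCompCard X d : ℝ) + A.ncard ≤ s := by
      exact_mod_cast maxCompCard_add_ncard_small_le hfin hge
    linarith

end Counting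

section LocalLimit

variable {Ω : ℕ → Type*} [∀ n, MeasurableSpace (Ω n)] {μ : ∀ n, Measure (Ω n)}
  {Vn : ℕ → Type*} {X : ∀ n, Ω n → SComplex (Vn n)} {d : ℕ}
  {Ω' : Type*} [MeasurableSpace Ω'] {ν : Measure Ω'} {Y : Ω' → Rooted ℕ}

lemma measure_iso_eq_zero_of_forall_not_iso [∀ n, IsProbabilityMeasure (μ n)]
    [IsFiniteMeasure ν] (hlwc : ConvLWCinP μ X d ν Y) {r : ℕ} {H : Rooted ℕ}
    (h : ∀ n ω σ, σ ∈ simplices (X n ω) (d - 1) → ¬ Iso (ballOf ⟨X n ω, σ⟩ d r) H) :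
    ν {ω' | Iso (ballOf (Y ω') d r) H} = 0 := by
  by_contra hne
  set c := (ν {ω' | Iso (ballOf (Y ω') d r) H}).toReal with hcdef
  have hc : 0 < c := ENNReal.toReal_pos hne (measure_ne_top _ _)
  have huniv : ∀ n, {ω | c / 2 < |(Set.ncard {σ | σ ∈ simplices (X n ω) (d - 1) ∧
      Iso (ballOf ⟨X n ω, σ⟩ d r) H} : ℝ) / (scount (X n ω) (d - 1) : ℝ) - c|} = Set.univ := by
    refine fun n => Set.eq_univ_of_forall fun ω => ?_
    have hempty : {σ | σ ∈ simplices (X n ω) (d - 1) ∧ Iso (ballOf ⟨X n ω, σ⟩ d r) H} = ∅ :=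
      Set.eq_empty_of_forall_notMem fun σ hσ => h n ω σ hσ.1 hσ.2
    show c / 2 < |_|
    rw [hempty, Set.ncard_empty, Nat.cast_zero, zero_div, zero_sub, abs_neg, abs_of_pos hc]
    linarith
  have hlim := hlwc r H (c / 2) (half_pos hc)
  rw [← hcdef] at hlim
  simp only [huniv, measure_univ, ENNReal.toReal_one] at hlim
  exact one_ne_zero (tendsto_nhds_unique tendsto_const_nhds hlim)

/-- Every other radius-`0` class is never seen in `X n`, and there are only countably many of
them. -/
lemma ae_root_mem_simplices [∀ n, IsProbabilityMeasure (μ n)] [IsFiniteMeasure ν]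
    (hlwc : ConvLWCinP μ X d ν Y) : ∀ᵐ ω' ∂ν, (Y ω').root ∈ simplices (Y ω').cplx (d - 1) := by
  set B := {H : Rooted ℕ | H.cplx.faces.Finite ∧ H.root ∉ simplices H.cplx (d - 1)}
  have hB : ν (⋃ H ∈ B, {ω' | Iso (ballOf (Y ω') d 0) H}) = 0 :=
    (measure_biUnion_null_iff (countable_setOf_faces_finite.mono fun _ hH => hH.1)).2
      fun H hH => measure_iso_eq_zero_of_forall_not_iso hlwc fun n ω σ hσ hiso =>
        hH.2 (hiso.root_mem_simplices (root_mem_simplices_ball hσ 0))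
  refine ae_iff.2 (measure_mono_null (fun ω' hω' => ?_) hB)
  refine Set.mem_biUnion (x := ballOf (Y ω') d 0) ⟨?_, fun h => hω' ⟨h.1.1, h.2⟩⟩ (Iso.refl _)
  exact (Y ω').root.powerset.finite_toSet.subset fun ρ hρ => Finset.mem_powerset.2 hρ.2.1

/-- Continuity from below in `K`, then countable subadditivity over a transversal of the
isomorphism classes in `smallRooted d K`. -/
lemma exists_finset_smallRooted
    (hroot : ∀ᵐ ω' ∂ν, (Y ω').root ∈ simplices (Y ω').cplx (d - 1)) {a : ℝ≥0∞}
    (ha : a < ν {ω' | (component (Y ω').cplx d (Y ω').root).Finite}) :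
    ∃ K, ∃ F : Finset (Rooted ℕ), (∀ H ∈ F, H ∈ smallRooted d K) ∧
      (∀ H₁ ∈ F, ∀ H₂ ∈ F, Iso H₁ H₂ → H₁ = H₂) ∧
      a < ∑ H ∈ F, ν {ω' | Iso (ballOf (Y ω') d K) H} := by
  set E : ℕ → Set Ω' := fun K => {ω' | (Y ω').root ∈ simplices (Y ω').cplx (d - 1) ∧
    (component (Y ω').cplx d (Y ω').root).Finite ∧ (component (Y ω').cplx d (Y ω').root).ncard < K}
  have hmono : Monotone E := fun K K' h ω' hω' => ⟨hω'.1, hω'.2.1, hω'.2.2.trans_le h⟩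
  have hlt : a < ⨆ K, ν (E K) := by
    rw [← hmono.measure_iUnion]
    refine ha.trans_le (measure_mono_ae (hroot.mono fun ω' hr hfin => ?_))
    exact Set.mem_iUnion.2 ⟨_, hr, hfin, Nat.lt_succ_self _⟩
  obtain ⟨K, hK⟩ := lt_iSup_iff.1 hlt
  obtain ⟨T, hTs, hTcover, hTdistinct⟩ := exists_transversal (s := smallRooted d K) (r := Iso)
    (fun H _ => Iso.refl H) (fun H hH _ _ h => h.symm hH.1.1) fun _ _ _ _ _ _ h h' => h.trans h'
  have hET : E K ⊆ ⋃ H ∈ T, {ω' | Iso (ballOf (Y ω') d K) H} := fun ω' hω' => by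
    obtain ⟨H, hH, hiso⟩ := hTcover _ (ballOf_mem_smallRooted hω'.1 hω'.2.1 hω'.2.2)
    exact Set.mem_biUnion hH hiso
  obtain ⟨F, hFT, hF⟩ :=
    exists_finset_lt_sum_measure ((countable_smallRooted d K).mono hTs)
      (hK.trans_le (measure_mono hET))
  exact ⟨K, F, fun H hH => hTs (hFT hH),
    fun H₁ h₁ H₂ h₂ => hTdistinct H₁ (hFT h₁) H₂ (hFT h₂), hF⟩

end LocalLimit

theorem lwc_upper_bound_giant_general
    {Ω : ℕ → Type*} [∀ n, MeasurableSpace (Ω n)]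
    (μ : ∀ n, Measure (Ω n)) (hprob : ∀ n, IsProbabilityMeasure (μ n))
    {Vn : ℕ → Type*} (X : ∀ n, Ω n → SComplex (Vn n)) (d : ℕ)
    (hfin : ∀ n ω, (X n ω).faces.Finite)
    (hgrow : ∀ K : ℕ,
      Tendsto (fun n => ((μ n) {ω | K ≤ scount (X n ω) (d - 1)}).toReal)
        atTop (nhds 1))
    {Ω' : Type*} [MeasurableSpace Ω'] (ν : Measure Ω') [IsProbabilityMeasure ν]
    (Y : Ω' → Rooted ℕ)
    (hlwc : ConvLWCinP μ X d ν Y) :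
    ∀ ε > (0 : ℝ),
      Tendsto (fun n => ((μ n) {ω |
        (maxCompCard (X n ω) d : ℝ) ≤ (scount (X n ω) (d - 1) : ℝ) *
          ((ν {ω' | ¬ (component (Y ω').cplx d (Y ω').root).Finite}).toReal
            + ε)}).toReal) atTop (nhds 1) := by
  intro ε hε
  have := hprob
  set z := (ν {ω' | ¬ (component (Y ω').cplx d (Y ω').root).Finite}).toReal
  have hz : 0 ≤ z := ENNReal.toReal_nonneg
  rcases le_or_gt 1 (z + ε) with hsure | hlt
  · refine tendsto_const_nhds.congr fun n => ?_
    simp [maxCompCard_le_mul_of_one_le (hfin n _) hsure]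
  have hfinite : ENNReal.ofReal (1 - z - ε / 2) <
      ν {ω' | (component (Y ω').cplx d (Y ω').root).Finite} := by
    rw [ENNReal.ofReal_lt_iff_lt_toReal (by linarith) (measure_ne_top _ _)]
    linarith [one_le_toReal_measure_add_not ν
      fun ω' => (component (Y ω').cplx d (Y ω').root).Finite]
  obtain ⟨K, F, hF, hdistinct, hmass⟩ :=
    exists_finset_smallRooted (ae_root_mem_simplices hlwc) hfinite
  rw [ENNReal.ofReal_lt_iff_lt_toReal (by linarith) (by simp [measure_ne_top]),
    ENNReal.toReal_sum fun _ _ => measure_ne_top _ _] at hmass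
  set δ := ε / (2 * (F.card + 1))
  have hδ : F.card * δ ≤ ε / 2 := by
    rw [mul_div_assoc', div_le_div_iff₀ (by positivity) two_pos]
    nlinarith
  refine tendsto_measure_of_diff_subset F (hgrow ⌈K / ε⌉₊)
    (fun H _ => hlwc K H δ (by positivity)) fun n ω ⟨hs, hω⟩ => ?_
  refine maxCompCard_le_of_sum_le (hfin n ω) hF hdistinct hz
    ((div_le_iff₀ hε).1 ((Nat.le_ceil _).trans (by exact_mod_cast hs))) ?_
  have hclose := sub_card_mul_le_sum_of_abs_sub_le F fun H hH =>
    not_lt.1 fun h => hω (Set.mem_biUnion hH h)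
  linarith

/-- Proposition 2.2, local weak convergence upper-bounds the
giant component.  If `s_{d-1}(X_n) → ∞` (in probability) and `X n` converges
locally weakly in probability to `(ν, Y)`, then with
`ζ = ν(s_{d-1}(C(o)) = ∞)` the survival probability of the component of the
root, for every `ε > 0`,
`P(s_{d-1}(C_max) ≤ s_{d-1}(X_n)(ζ + ε)) → 1`. -/
theorem lwc_upper_bound_giant
    {Ω : ℕ → Type*} [∀ n, MeasurableSpace (Ω n)]
    (μ : ∀ n, Measure (Ω n)) (hprob : ∀ n, IsProbabilityMeasure (μ n))
    {Vn : ℕ → Type*} (X : ∀ n, Ω n → SComplex (Vn n)) (d : ℕ)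
    (hfin : ∀ n ω, (X n ω).faces.Finite)
    (hdim : ∀ n ω, ∀ σ ∈ (X n ω).faces, σ.card ≤ d + 1)
    (hgrow : ∀ K : ℕ,
      Tendsto (fun n => ((μ n) {ω | K ≤ scount (X n ω) (d - 1)}).toReal)
        atTop (nhds 1))
    {Ω' : Type*} [MeasurableSpace Ω'] (ν : Measure Ω') [IsProbabilityMeasure ν]
    (Y : Ω' → Rooted ℕ)
    (hlwc : ConvLWCinP μ X d ν Y) :
    ∀ ε > (0 : ℝ),
      Tendsto (fun n => ((μ n) {ω |
        (maxCompCard (X n ω) d : ℝ) ≤ (scount (X n ω) (d - 1) : ℝ) *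
          ((ν {ω' | ¬ (component (Y ω').cplx d (Y ω').root).Finite}).toReal
            + ε)}).toReal) atTop (nhds 1) :=
  lwc_upper_bound_giant_general μ hprob X d hfin hgrow ν Y hlwc

end RSC
end

section
/- Let C be the total progeny of a Galton–Watson branching process whose offspring distribution is d·Poi(λ) (d times a Poisson random variable with mean λ), with the convention 1/C := 0 when C = ∞. Then E[1/C] = γ_λ − λ·(d/(d+1))·γ_λ^{d+1}, where γ_λ is the extinction probability of the process, i.e. the smallest solution in [0,1] of γ = e^{−λ(1−γ^d)}. Moreover, the restricted generating function G(z) := E[ z^C · 1{C < ∞} ] satisfies G(z) = z·e^{λ(G(z)^d − 1)} for z ∈ [0,1], and E[1/C] = ∫_0^1 G(t)/t dt. -/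
open MeasureTheory Filter Finset Asymptotics
open scoped ENNReal NNReal Classical

namespace RSC

variable {V W : Type*}

/-!
On the event `C < ∞` the family tree is a finite plane tree `t`, and it equals `t` with probability
`w(t) = ∏_{v ∈ t} p(number of children of v)`. Splitting trees at the root turns
`G(z) = ∑_t w(t) z^|t| = E[z^C; C < ∞]` into `G(z) = z φ(G(z))` with `φ(s) = e^{λ(s^d - 1)}`, and
truncating trees by height shows that `G(1)` lies below every fixed point of `φ`, so `G(1) = γ_λ`.
Finally `E[1/C] = ∑ P(C = n) / n` and `G - λ d/(d+1) G^{d+1}` are both antiderivatives of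
`G(t)/t` on `(0, 1)`: the first termwise, the second by differentiating the functional equation,
`(1 - λ d G^d) G' = G / t`.
-/

namespace GaltonWatson

/-! A finite plane tree is encoded as in `gwTree`: a node is the list of child indices on the
path from it up to the root, most recent first, so `c :: l` is the `c`-th child of `l`. -/

noncomputable def childIndices (t : Finset (List ℕ)) (l : List ℕ) : Finset ℕ :=
  t.preimage (· :: l) fun _ _ _ _ h => List.head_eq_of_cons_eq h

@[simp]
lemma mem_childIndices {t : Finset (List ℕ)} {l : List ℕ} {c : ℕ} :
    c ∈ childIndices t l ↔ c :: l ∈ t :=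
  Finset.mem_preimage

noncomputable def numChildren (t : Finset (List ℕ)) (l : List ℕ) : ℕ := (childIndices t l).card

def IsPlaneTree (t : Finset (List ℕ)) : Prop :=
  [] ∈ t ∧ ∀ c l, c :: l ∈ t ↔ l ∈ t ∧ c < numChildren t l

abbrev PlaneTree : Type := {t : Finset (List ℕ) // IsPlaneTree t}

lemma append_singleton_inj {l l' : List ℕ} {i j : ℕ} (h : l ++ [i] = l' ++ [j]) :
    l = l' ∧ i = j := by
  simpa using List.append_inj' h rfl

lemma IsPlaneTree.mem_of_append_mem {t : Finset (List ℕ)} (ht : IsPlaneTree t) :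
    ∀ {x l : List ℕ}, x ++ l ∈ t → l ∈ t
  | [], _, h => h
  | _ :: _, _, h => ht.mem_of_append_mem ((ht.2 _ _).1 h).1

noncomputable def subtree (i : ℕ) (t : Finset (List ℕ)) : Finset (List ℕ) :=
  t.preimage (· ++ [i]) (List.append_left_injective [i]).injOn

@[simp]
lemma mem_subtree {i : ℕ} {t : Finset (List ℕ)} {l : List ℕ} :
    l ∈ subtree i t ↔ l ++ [i] ∈ t :=
  Finset.mem_preimage

lemma isPlaneTree_subtree {t : Finset (List ℕ)} (ht : IsPlaneTree t) {i : ℕ}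
    (hi : i < numChildren t []) : IsPlaneTree (subtree i t) := by
  refine ⟨by simpa using (ht.2 i []).2 ⟨ht.1, hi⟩, fun c l => ?_⟩
  have : childIndices (subtree i t) l = childIndices t (l ++ [i]) := by
    ext; simp
  rw [numChildren, this, mem_subtree, mem_subtree, List.cons_append, ht.2]
  rfl

def appendSingleton (i : ℕ) : List ℕ ↪ List ℕ := ⟨(· ++ [i]), List.append_left_injective _⟩

def graft {m : ℕ} (f : Fin m → Finset (List ℕ)) : Finset (List ℕ) :=
  insert [] (Finset.univ.biUnion fun i => (f i).map (appendSingleton i))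

lemma mem_graft {m : ℕ} {f : Fin m → Finset (List ℕ)} {l : List ℕ} :
    l ∈ graft f ↔ l = [] ∨ ∃ i, ∃ x ∈ f i, x ++ [(i : ℕ)] = l := by
  simp [graft, appendSingleton]

lemma nil_notMem_biUnion {m : ℕ} (f : Fin m → Finset (List ℕ)) :
    [] ∉ Finset.univ.biUnion fun i => (f i).map (appendSingleton i) := by
  simp [appendSingleton]

lemma pairwiseDisjoint_map_appendSingleton {m : ℕ} (f : Fin m → Finset (List ℕ)) :
    ((Finset.univ : Finset (Fin m)) : Set (Fin m)).PairwiseDisjoint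
      fun i => (f i).map (appendSingleton i) := by
  intro i _ j _ hij
  simp only [Function.onFun, Finset.disjoint_left, Finset.mem_map, appendSingleton,
    Function.Embedding.coeFn_mk]
  rintro _ ⟨x, -, rfl⟩ ⟨y, -, h⟩
  exact hij (Fin.ext (append_singleton_inj h).2).symm

lemma prod_graft {M : Type*} [CommMonoid M] {m : ℕ} (f : Fin m → Finset (List ℕ))
    (g : List ℕ → M) :
    ∏ l ∈ graft f, g l = g [] * ∏ i, ∏ x ∈ f i, g (x ++ [(i : ℕ)]) := by
  rw [graft, Finset.prod_insert (nil_notMem_biUnion f),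
    Finset.prod_biUnion (pairwiseDisjoint_map_appendSingleton f)]
  simp [appendSingleton]

lemma card_graft {m : ℕ} (f : Fin m → Finset (List ℕ)) :
    (graft f).card = ∑ i, (f i).card + 1 := by
  rw [graft, Finset.card_insert_of_notMem (nil_notMem_biUnion f),
    Finset.card_biUnion (pairwiseDisjoint_map_appendSingleton f)]
  simp

section Graft

variable {m : ℕ} {f : Fin m → Finset (List ℕ)}

lemma append_mem_graft {x : List ℕ} {i : ℕ} :
    x ++ [i] ∈ graft f ↔ ∃ h : i < m, x ∈ f ⟨i, h⟩ := by
  rw [mem_graft]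
  constructor
  · rintro (h | ⟨j, y, hy, h⟩)
    · simp at h
    · obtain ⟨rfl, rfl⟩ := append_singleton_inj h
      exact ⟨j.2, hy⟩
  · rintro ⟨hi, hx⟩
    exact Or.inr ⟨⟨i, hi⟩, x, hx, rfl⟩

lemma numChildren_graft_nil (hf : ∀ i, [] ∈ f i) : numChildren (graft f) [] = m := by
  have : childIndices (graft f) [] = Finset.range m := by
    ext c
    rw [mem_childIndices, ← List.nil_append [c], append_mem_graft, Finset.mem_range]
    exact ⟨fun ⟨h, _⟩ => h, fun h => ⟨h, hf _⟩⟩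
  rw [numChildren, this, Finset.card_range]

lemma numChildren_graft_append (i : Fin m) (x : List ℕ) :
    numChildren (graft f) (x ++ [(i : ℕ)]) = numChildren (f i) x := by
  unfold numChildren
  congr 1
  ext c
  rw [mem_childIndices, mem_childIndices, ← List.cons_append, append_mem_graft]
  exact ⟨fun ⟨_, h⟩ => h, fun h => ⟨i.2, h⟩⟩

lemma isPlaneTree_graft (hf : ∀ i, IsPlaneTree (f i)) : IsPlaneTree (graft f) := by
  refine ⟨mem_graft.2 (Or.inl rfl), fun c l => ?_⟩
  rcases List.eq_nil_or_concat' l with rfl | ⟨x, i, rfl⟩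
  · rw [← List.nil_append [c], append_mem_graft, numChildren_graft_nil fun i => (hf i).1]
    exact ⟨fun ⟨hc, _⟩ => ⟨mem_graft.2 (Or.inl rfl), hc⟩, fun ⟨_, hc⟩ => ⟨hc, (hf _).1⟩⟩
  · rw [← List.cons_append, append_mem_graft, append_mem_graft]
    constructor
    · rintro ⟨hi, hc⟩
      rw [numChildren_graft_append ⟨i, hi⟩]
      exact ⟨⟨hi, ((hf _).2 c x).1 hc |>.1⟩, ((hf _).2 c x).1 hc |>.2⟩
    · rintro ⟨⟨hi, hx⟩, hc⟩
      rw [numChildren_graft_append ⟨i, hi⟩] at hc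
      exact ⟨hi, ((hf _).2 c x).2 ⟨hx, hc⟩⟩

lemma subtree_graft (i : Fin m) : subtree i (graft f) = f i := by
  ext x
  rw [mem_subtree, append_mem_graft]
  exact ⟨fun ⟨_, h⟩ => h, fun h => ⟨i.2, h⟩⟩

lemma prod_numChildren_graft (p : ℕ → ℝ≥0∞) (hf : ∀ i, IsPlaneTree (f i)) :
    ∏ l ∈ graft f, p (numChildren (graft f) l) = p m * ∏ i, ∏ l ∈ f i, p (numChildren (f i) l) := by
  simp only [prod_graft, numChildren_graft_nil fun i => (hf i).1, numChildren_graft_append]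

end Graft

lemma graft_subtree {t : Finset (List ℕ)} (ht : IsPlaneTree t) :
    graft (fun i : Fin (numChildren t []) => subtree i t) = t := by
  ext l
  rcases List.eq_nil_or_concat' l with rfl | ⟨x, i, rfl⟩
  · exact iff_of_true (mem_graft.2 (Or.inl rfl)) ht.1
  · rw [append_mem_graft]
    refine ⟨fun ⟨_, h⟩ => mem_subtree.1 h, fun h => ⟨?_, mem_subtree.2 h⟩⟩
    exact ((ht.2 i []).1 (ht.mem_of_append_mem h)).2

lemma tsum_fin_pi_prod_eq_pow {α : Type*} (g : α → ℝ≥0∞) :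
    ∀ m : ℕ, ∑' f : Fin m → α, ∏ i, g (f i) = (∑' a, g a) ^ m
  | 0 => by simp
  | m + 1 => by
    rw [← (Fin.consEquiv fun _ => α).tsum_eq, ENNReal.tsum_prod', pow_succ',
      ← tsum_fin_pi_prod_eq_pow g m, ← ENNReal.tsum_mul_right]
    refine tsum_congr fun a => ?_
    simp [Fin.prod_univ_succ, ENNReal.tsum_mul_left]

lemma tsum_pi_prod_eq_pow {ι α : Type*} [Fintype ι] (g : α → ℝ≥0∞) :
    ∑' f : ι → α, ∏ i, g (f i) = (∑' a, g a) ^ Fintype.card ι := by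
  rw [← tsum_fin_pi_prod_eq_pow, ← ((Fintype.equivFin ι).arrowCongr (Equiv.refl α)).tsum_eq]
  exact tsum_congr fun f => Fintype.prod_equiv (Fintype.equivFin ι) _ _ (by simp)

namespace PlaneTree

def graft {m : ℕ} (f : Fin m → PlaneTree) : PlaneTree :=
  ⟨GaltonWatson.graft fun i => (f i).1, isPlaneTree_graft fun i => (f i).2⟩

lemma graft_bijective :
    Function.Bijective fun x : Σ m, Fin m → PlaneTree => graft x.2 := by
  constructor
  · rintro ⟨m, f⟩ ⟨m', f'⟩ h
    have hroot := congrArg (fun t : PlaneTree => numChildren t.1 []) h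
    simp only [graft, numChildren_graft_nil fun i => (f i).2.1,
      numChildren_graft_nil fun i => (f' i).2.1] at hroot
    subst hroot
    have hsub := fun i : Fin m => congrArg (fun t : PlaneTree => subtree i t.1) h
    simp only [graft, subtree_graft] at hsub
    exact Sigma.ext rfl (heq_of_eq (funext fun i => Subtype.ext (hsub i)))
  · intro t
    exact ⟨⟨_, fun i => ⟨subtree i t.1, isPlaneTree_subtree t.2 i.2⟩⟩,
      Subtype.ext (graft_subtree t.2)⟩

lemma tsum_eq_tsum_graft (F : PlaneTree → ℝ≥0∞) :
    ∑' t, F t = ∑' m, ∑' f : Fin m → PlaneTree, F (graft f) := by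
  rw [← (Equiv.ofBijective _ graft_bijective).tsum_eq, ENNReal.tsum_sigma']
  rfl

noncomputable def weight (p : ℕ → ℝ≥0∞) (t : PlaneTree) : ℝ≥0∞ :=
  ∏ l ∈ t.1, p (numChildren t.1 l)

lemma weight_graft (p : ℕ → ℝ≥0∞) {m : ℕ} (f : Fin m → PlaneTree) :
    weight p (graft f) = p m * ∏ i, weight p (f i) :=
  prod_numChildren_graft p fun i => (f i).2

lemma card_graft {m : ℕ} (f : Fin m → PlaneTree) :
    (graft f).1.card = ∑ i, (f i).1.card + 1 :=
  GaltonWatson.card_graft _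

lemma tsum_ite_weight_mul_pow (p : ℕ → ℝ≥0∞) (x : ℝ≥0∞) (P Q : PlaneTree → Prop)
    (hPQ : ∀ m (f : Fin m → PlaneTree), P (graft f) ↔ ∀ i, Q (f i)) :
    ∑' t, (if P t then weight p t * x ^ t.1.card else 0)
      = x * ∑' m, p m * (∑' t, if Q t then weight p t * x ^ t.1.card else 0) ^ m := by
  rw [tsum_eq_tsum_graft, ← ENNReal.tsum_mul_left]
  refine tsum_congr fun m => ?_
  have hterm : ∀ f : Fin m → PlaneTree,
      (if P (graft f) then weight p (graft f) * x ^ (graft f).1.card else 0)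
        = x * p m * ∏ i, (if Q (f i) then weight p (f i) * x ^ (f i).1.card else 0) := by
    intro f
    rw [Finset.prod_ite_zero, hPQ]
    simp only [Finset.mem_univ, true_implies]
    split_ifs
    · rw [weight_graft, card_graft, pow_succ, Finset.prod_mul_distrib, Finset.prod_pow_eq_pow_sum]
      ring
    · rw [mul_zero]
  rw [tsum_congr hterm, ENNReal.tsum_mul_left,
    tsum_pi_prod_eq_pow fun t => if Q t then weight p t * x ^ t.1.card else 0,
    Fintype.card_fin, mul_assoc]

def HeightLT (n : ℕ) (t : PlaneTree) : Prop := ∀ l ∈ t.1, l.length < n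

lemma heightLT_graft {n : ℕ} (m : ℕ) (f : Fin m → PlaneTree) :
    (graft f).HeightLT (n + 1) ↔ ∀ i, (f i).HeightLT n := by
  refine ⟨fun h i x hx => by simpa using h (x ++ [(i : ℕ)]) (append_mem_graft.2 ⟨i.2, hx⟩),
    fun h l hl => ?_⟩
  rcases mem_graft.1 hl with rfl | ⟨i, x, hx, rfl⟩
  · simp
  · simpa using h i x hx

lemma exists_heightLT (S : Finset PlaneTree) : ∃ n, ∀ t ∈ S, t.HeightLT n :=
  ⟨S.sup fun t => t.1.sup List.length + 1, fun _ ht _ hl =>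
    (Nat.lt_succ_of_le (Finset.le_sup hl)).trans_le
      (Finset.le_sup (f := fun t : PlaneTree => t.1.sup List.length + 1) ht)⟩

end PlaneTree

open PlaneTree

noncomputable def offspringGen (p : ℕ → ℝ≥0∞) (s : ℝ≥0∞) : ℝ≥0∞ := ∑' m, p m * s ^ m

lemma offspringGen_mono (p : ℕ → ℝ≥0∞) : Monotone (offspringGen p) :=
  fun _ _ h => ENNReal.tsum_le_tsum fun _ => mul_le_mul_right (pow_le_pow_left' h _) _

noncomputable def progenyGen (p : ℕ → ℝ≥0∞) (x : ℝ≥0∞) : ℝ≥0∞ :=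
  ∑' t : PlaneTree, weight p t * x ^ t.1.card

lemma progenyGen_eq (p : ℕ → ℝ≥0∞) (x : ℝ≥0∞) :
    progenyGen p x = x * offspringGen p (progenyGen p x) := by
  simpa [progenyGen, offspringGen] using
    tsum_ite_weight_mul_pow p x (fun _ => True) (fun _ => True) (by simp)

/-- The probability that the process dies out before generation `n`. -/
noncomputable def extinctionBy (p : ℕ → ℝ≥0∞) (n : ℕ) : ℝ≥0∞ :=
  ∑' t : PlaneTree, if t.HeightLT n then weight p t else 0

lemma extinctionBy_zero (p : ℕ → ℝ≥0∞) : extinctionBy p 0 = 0 :=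
  ENNReal.tsum_eq_zero.2 fun t => if_neg fun h => by simpa using h [] t.2.1

lemma extinctionBy_succ (p : ℕ → ℝ≥0∞) (n : ℕ) :
    extinctionBy p (n + 1) = offspringGen p (extinctionBy p n) := by
  simpa [extinctionBy, offspringGen] using
    tsum_ite_weight_mul_pow p 1 (HeightLT (n + 1)) (HeightLT n) heightLT_graft

lemma extinctionBy_le (p : ℕ → ℝ≥0∞) {s : ℝ≥0∞} (hs : offspringGen p s ≤ s) (n : ℕ) :
    extinctionBy p n ≤ s := by
  induction n with
  | zero => simp [extinctionBy_zero]
  | succ n ih => exact (extinctionBy_succ p n).trans_le ((offspringGen_mono p ih).trans hs)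

lemma progenyGen_one_le (p : ℕ → ℝ≥0∞) {s : ℝ≥0∞} (hs : offspringGen p s ≤ s) :
    progenyGen p 1 ≤ s := by
  rw [progenyGen, ENNReal.tsum_eq_iSup_sum]
  refine iSup_le fun S => ?_
  obtain ⟨n, hn⟩ := exists_heightLT S
  calc ∑ t ∈ S, weight p t * 1 ^ t.1.card
      = ∑ t ∈ S, if t.HeightLT n then weight p t else 0 :=
        Finset.sum_congr rfl fun t ht => by rw [if_pos (hn t ht), one_pow, mul_one]
    _ ≤ extinctionBy p n := ENNReal.sum_le_tsum S
    _ ≤ s := extinctionBy_le p hs n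

noncomputable def progenyProb (p : ℕ → ℝ≥0∞) (n : ℕ) : ℝ≥0∞ :=
  ∑' t : PlaneTree, if t.1.card = n then weight p t else 0

lemma tsum_mul_weight_eq_tsum_mul_progenyProb (p φ : ℕ → ℝ≥0∞) :
    ∑' t : PlaneTree, φ t.1.card * weight p t = ∑' n, φ n * progenyProb p n := by
  calc ∑' t : PlaneTree, φ t.1.card * weight p t
      = ∑' t : PlaneTree, ∑' n, if t.1.card = n then φ n * weight p t else 0 :=
        tsum_congr fun t => by simp_rw [eq_comm (a := t.1.card)]; rw [tsum_ite_eq]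
    _ = ∑' n, φ n * progenyProb p n := by
        rw [ENNReal.tsum_comm]
        simp only [progenyProb, ← ENNReal.tsum_mul_left, mul_ite, mul_zero]

lemma progenyProb_zero (p : ℕ → ℝ≥0∞) : progenyProb p 0 = 0 :=
  ENNReal.tsum_eq_zero.2 fun t => if_neg (Finset.card_ne_zero_of_mem t.2.1)

lemma progenyGen_eq_tsum (p : ℕ → ℝ≥0∞) (x : ℝ≥0∞) :
    progenyGen p x = ∑' n, x ^ n * progenyProb p n := by
  rw [progenyGen, ← tsum_mul_weight_eq_tsum_mul_progenyProb]
  exact tsum_congr fun t => mul_comm _ _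

lemma progenyProb_le_progenyGen_one (p : ℕ → ℝ≥0∞) (n : ℕ) : progenyProb p n ≤ progenyGen p 1 := by
  rw [progenyGen_eq_tsum]
  simpa using ENNReal.le_tsum (f := progenyProb p) n

lemma summable_toReal_progenyProb {p : ℕ → ℝ≥0∞} (h : progenyGen p 1 ≠ ⊤) :
    Summable fun n => (progenyProb p n).toReal :=
  ENNReal.summable_toReal (by simpa [progenyGen_eq_tsum] using h)

lemma progenyGen_ofReal {p : ℕ → ℝ≥0∞} (h : progenyGen p 1 ≠ ⊤) {x : ℝ} (hx0 : 0 ≤ x)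
    (hx1 : x ≤ 1) :
    progenyGen p (ENNReal.ofReal x) = ENNReal.ofReal (∑' n, (progenyProb p n).toReal * x ^ n) := by
  have hle : ∀ n, (progenyProb p n).toReal * x ^ n ≤ (progenyProb p n).toReal := fun n =>
    mul_le_of_le_one_right ENNReal.toReal_nonneg (pow_le_one₀ hx0 hx1)
  rw [progenyGen_eq_tsum, ENNReal.ofReal_tsum_of_nonneg (fun n => by positivity)
    ((summable_toReal_progenyProb h).of_nonneg_of_le (fun n => by positivity) hle)]
  refine tsum_congr fun n => ?_
  rw [ENNReal.ofReal_mul ENNReal.toReal_nonneg, ENNReal.ofReal_toReal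
    (ne_top_of_le_ne_top h (progenyProb_le_progenyGen_one p n)), ENNReal.ofReal_pow hx0, mul_comm]

lemma nil_mem_gwTree (N : List ℕ → ℕ) : [] ∈ gwTree N := trivial

lemma cons_mem_gwTree {N : List ℕ → ℕ} {c : ℕ} {l : List ℕ} :
    c :: l ∈ gwTree N ↔ l ∈ gwTree N ∧ c < N l := by
  simp [gwTree, nodePresent]

lemma numChildren_toFinset_gwTree {N : List ℕ → ℕ} (hfin : (gwTree N).Finite) {l : List ℕ}
    (hl : l ∈ gwTree N) : numChildren hfin.toFinset l = N l := by
  have : childIndices hfin.toFinset l = Finset.range (N l) := by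
    ext c
    simp [cons_mem_gwTree, hl]
  rw [numChildren, this, Finset.card_range]

lemma isPlaneTree_toFinset_gwTree {N : List ℕ → ℕ} (hfin : (gwTree N).Finite) :
    IsPlaneTree hfin.toFinset := by
  refine ⟨by simpa using nil_mem_gwTree N, fun c l => ?_⟩
  simp only [Set.Finite.mem_toFinset, cons_mem_gwTree]
  exact and_congr_right fun hl => by rw [numChildren_toFinset_gwTree hfin hl]

section Measure

variable {Ω : Type*}

def familyEvent (N : Ω → List ℕ → ℕ) (t : Finset (List ℕ)) : Set Ω :=
  {ω | ∀ l ∈ t, N ω l = numChildren t l}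

lemma gwTree_eq_of_mem_familyEvent {N : Ω → List ℕ → ℕ} {t : Finset (List ℕ)}
    (ht : IsPlaneTree t) {ω : Ω} (hω : ω ∈ familyEvent N t) : gwTree (N ω) = t := by
  ext l
  induction l with
  | nil => exact iff_of_true (nil_mem_gwTree _) ht.1
  | cons c l ih =>
    rw [cons_mem_gwTree, Finset.mem_coe, ht.2, ih, Finset.mem_coe]
    exact and_congr_right fun hl => by rw [hω l hl]

lemma setOf_gwTree_finite_eq_iUnion (N : Ω → List ℕ → ℕ) :
    {ω | (gwTree (N ω)).Finite} = ⋃ t : PlaneTree, familyEvent N t.1 := by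
  ext ω
  simp only [Set.mem_iUnion]
  constructor
  · intro hfin
    exact ⟨⟨_, isPlaneTree_toFinset_gwTree hfin⟩, fun l hl =>
      (numChildren_toFinset_gwTree hfin (by simpa using hl)).symm⟩
  · rintro ⟨t, ht⟩
    change (gwTree (N ω)).Finite
    rw [gwTree_eq_of_mem_familyEvent t.2 ht]
    exact t.1.finite_toSet

lemma pairwise_disjoint_familyEvent (N : Ω → List ℕ → ℕ) :
    Pairwise (Function.onFun Disjoint fun t : PlaneTree => familyEvent N t.1) := by
  intro t t' hne
  refine Set.disjoint_left.2 fun ω hω hω' => hne (Subtype.ext (Finset.coe_injective ?_))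
  rw [← gwTree_eq_of_mem_familyEvent t.2 hω, ← gwTree_eq_of_mem_familyEvent t'.2 hω']

lemma ofReal_ite_gwTree_finite (N : Ω → List ℕ → ℕ) (val : ℕ → ℝ) (ω : Ω) :
    ENNReal.ofReal (if (gwTree (N ω)).Finite then val (gwTree (N ω)).ncard else 0)
      = ∑' t : PlaneTree,
          (familyEvent N t.1).indicator (fun _ => ENNReal.ofReal (val t.1.card)) ω := by
  by_cases hfin : (gwTree (N ω)).Finite
  · have : ω ∈ ⋃ t : PlaneTree, familyEvent N t.1 := setOf_gwTree_finite_eq_iUnion N ▸ hfin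
    obtain ⟨t, ht⟩ := Set.mem_iUnion.1 this
    rw [tsum_eq_single t fun t' ht' => Set.indicator_of_notMem
      (Set.disjoint_left.1 (pairwise_disjoint_familyEvent N ht'.symm) ht) _,
      Set.indicator_of_mem ht, if_pos hfin, gwTree_eq_of_mem_familyEvent t.2 ht,
      Set.ncard_coe_finset]
  · rw [if_neg hfin, ENNReal.ofReal_zero, eq_comm, ENNReal.tsum_eq_zero]
    refine fun t => Set.indicator_of_notMem (fun ht => hfin ?_) _
    rw [gwTree_eq_of_mem_familyEvent t.2 ht]
    exact t.1.finite_toSet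

variable [MeasurableSpace Ω] {μ : Measure Ω}

lemma nullMeasurableSet_of_measure_add_measure_compl_le [IsFiniteMeasure μ] {A : Set Ω}
    (h : μ A + μ Aᶜ ≤ μ Set.univ) : NullMeasurableSet A μ := by
  set B := toMeasurable μ A
  set B' := toMeasurable μ Aᶜ
  have hunion : B ∪ B' = Set.univ := Set.eq_univ_of_forall fun x => by
    by_cases hx : x ∈ A
    exacts [Or.inl (subset_toMeasurable μ A hx), Or.inr (subset_toMeasurable μ Aᶜ hx)]
  have hinter : μ (B ∩ B') = 0 := by
    have key : μ Set.univ + μ (B ∩ B') ≤ μ Set.univ + 0 := by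
      rw [add_zero, ← hunion, measure_union_add_inter _ (measurableSet_toMeasurable _ _),
        measure_toMeasurable, measure_toMeasurable, hunion]
      exact h
    exact le_zero_iff.1 ((ENNReal.add_le_add_iff_left (measure_ne_top μ _)).1 key)
  refine (measurableSet_toMeasurable μ A).nullMeasurableSet.congr (ae_eq_set.2 ⟨?_, ?_⟩)
  · refine measure_mono_null ?_ hinter
    exact fun x hx => ⟨hx.1, subset_toMeasurable μ Aᶜ hx.2⟩
  · rw [Set.sdiff_eq_empty.2 (subset_toMeasurable μ A), measure_empty]

lemma nullMeasurableSet_preimage_singleton [IsFiniteMeasure μ] {β : Type*} [Countable β]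
    (X : Ω → β) (h : ∑' b, μ (X ⁻¹' {b}) ≤ μ Set.univ) (b : β) :
    NullMeasurableSet (X ⁻¹' {b}) μ := by
  classical
  refine nullMeasurableSet_of_measure_add_measure_compl_le (h.trans' ?_)
  rw [ENNReal.tsum_eq_add_tsum_ite b]
  gcongr
  calc μ (X ⁻¹' {b})ᶜ ≤ μ (⋃ b', if b' = b then ∅ else X ⁻¹' {b'}) :=
        measure_mono fun ω hω => Set.mem_iUnion.2 ⟨X ω, by simp_all⟩
    _ ≤ ∑' b', μ (if b' = b then ∅ else X ⁻¹' {b'}) := measure_iUnion_le _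
    _ = ∑' b', if b' = b then 0 else μ (X ⁻¹' {b'}) :=
        tsum_congr fun b' => by split_ifs <;> simp

def HasIIDOffspring (μ : Measure Ω) (N : Ω → List ℕ → ℕ) (p : ℕ → ℝ≥0∞) : Prop :=
  ∀ (s : Finset (List ℕ)) (κ : List ℕ → ℕ), μ {ω | ∀ l ∈ s, N ω l = κ l} = ∏ l ∈ s, p (κ l)

variable {N : Ω → List ℕ → ℕ} {p : ℕ → ℝ≥0∞}

lemma HasIIDOffspring.measure_preimage_restrict (hN : HasIIDOffspring μ N p)
    (s : Finset (List ℕ)) (v : s → ℕ) :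
    μ ((fun ω (l : s) => N ω l) ⁻¹' {v}) = ∏ l : s, p (v l) := by
  classical
  convert hN s fun l => if h : l ∈ s then v ⟨l, h⟩ else 0 using 2
  · ext ω
    simpa [funext_iff] using forall₂_congr fun l h => by rw [dif_pos h]
  · rw [← Finset.prod_coe_sort s]
    exact Finset.prod_congr rfl fun l _ => by rw [dif_pos l.2]

lemma HasIIDOffspring.measure_familyEvent (hN : HasIIDOffspring μ N p) (t : PlaneTree) :
    μ (familyEvent N t.1) = weight p t :=
  hN t.1 _

variable [IsProbabilityMeasure μ]

/-- `N` is not assumed measurable: the cylinder events are null-measurable because the outer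
measures of all cylinders over `s` add up to `1`. -/
lemma HasIIDOffspring.nullMeasurableSet (hN : HasIIDOffspring μ N p) (hp : ∑' m, p m = 1)
    (s : Finset (List ℕ)) (κ : List ℕ → ℕ) :
    NullMeasurableSet {ω | ∀ l ∈ s, N ω l = κ l} μ := by
  have hsum : ∑' v : s → ℕ, μ ((fun ω (l : s) => N ω l) ⁻¹' {v}) ≤ μ Set.univ := by
    simp_rw [hN.measure_preimage_restrict, tsum_pi_prod_eq_pow p, hp, one_pow, measure_univ,
      le_refl]
  convert nullMeasurableSet_preimage_singleton _ hsum fun l => κ l using 1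
  ext ω
  simp [funext_iff]

lemma HasIIDOffspring.nullMeasurableSet_familyEvent (hN : HasIIDOffspring μ N p)
    (hp : ∑' m, p m = 1) (t : Finset (List ℕ)) : NullMeasurableSet (familyEvent N t) μ :=
  hN.nullMeasurableSet hp t _

lemma HasIIDOffspring.measure_setOf_gwTree_finite (hN : HasIIDOffspring μ N p)
    (hp : ∑' m, p m = 1) : μ {ω | (gwTree (N ω)).Finite} = progenyGen p 1 := by
  rw [setOf_gwTree_finite_eq_iUnion, measure_iUnion₀
    (pairwise_disjoint_familyEvent N).aedisjoint fun t => hN.nullMeasurableSet_familyEvent hp _]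
  simp only [progenyGen, one_pow, mul_one, hN.measure_familyEvent]

lemma HasIIDOffspring.integral_gwTree_finite (hN : HasIIDOffspring μ N p)
    (hp : ∑' m, p m = 1) (val : ℕ → ℝ) (hval : ∀ n, 0 ≤ val n) :
    ∫ ω, (if (gwTree (N ω)).Finite then val (gwTree (N ω)).ncard else 0) ∂μ
      = (∑' t : PlaneTree, ENNReal.ofReal (val t.1.card) * weight p t).toReal := by
  have hmeas : ∀ t : PlaneTree, AEMeasurable
      ((familyEvent N t.1).indicator fun _ => ENNReal.ofReal (val t.1.card)) μ :=
    fun t => aemeasurable_const.indicator₀ (hN.nullMeasurableSet_familyEvent hp _)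
  have hnonneg : ∀ ω, 0 ≤ if (gwTree (N ω)).Finite then val (gwTree (N ω)).ncard else 0 :=
    fun ω => by split_ifs <;> simp [hval]
  have hf : (fun ω => if (gwTree (N ω)).Finite then val (gwTree (N ω)).ncard else 0) = fun ω =>
      (∑' t : PlaneTree, (familyEvent N t.1).indicator
        (fun _ => ENNReal.ofReal (val t.1.card)) ω).toReal := funext fun ω => by
    rw [← ofReal_ite_gwTree_finite, ENNReal.toReal_ofReal (hnonneg ω)]
  rw [hf, integral_toReal (AEMeasurable.tsum hmeas) (ae_of_all _ fun ω => ?_), lintegral_tsum hmeas]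
  · congr 1
    refine tsum_congr fun t => ?_
    rw [lintegral_indicator_const₀ (hN.nullMeasurableSet_familyEvent hp _),
      hN.measure_familyEvent]
  · rw [← ofReal_ite_gwTree_finite N val]
    exact ENNReal.ofReal_lt_top

lemma HasIIDOffspring.progenyGen_one_ne_top (hN : HasIIDOffspring μ N p) (hp : ∑' m, p m = 1) :
    progenyGen p 1 ≠ ⊤ := by
  rw [← hN.measure_setOf_gwTree_finite hp]
  exact measure_ne_top μ _

lemma HasIIDOffspring.integral_gwTree_finite_eq_tsum (hN : HasIIDOffspring μ N p)
    (hp : ∑' m, p m = 1) (val : ℕ → ℝ) (hval : ∀ n, 0 ≤ val n) :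
    ∫ ω, (if (gwTree (N ω)).Finite then val (gwTree (N ω)).ncard else 0) ∂μ
      = ∑' n, val n * (progenyProb p n).toReal := by
  rw [hN.integral_gwTree_finite hp val hval,
    tsum_mul_weight_eq_tsum_mul_progenyProb p fun n => ENNReal.ofReal (val n),
    ENNReal.tsum_toReal_eq fun n => ENNReal.mul_ne_top ENNReal.ofReal_ne_top
      (ne_top_of_le_ne_top (hN.progenyGen_one_ne_top hp) (progenyProb_le_progenyGen_one p n))]
  simp only [ENNReal.toReal_mul, ENNReal.toReal_ofReal (hval _)]

lemma HasIIDOffspring.gwGen_eq_tsum (hN : HasIIDOffspring μ N p) (hp : ∑' m, p m = 1) {z : ℝ}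
    (hz : 0 ≤ z) : gwGen μ N z = ∑' n, (progenyProb p n).toReal * z ^ n := by
  rw [gwGen, hN.integral_gwTree_finite_eq_tsum hp (fun n => z ^ n) fun n => pow_nonneg hz n]
  exact tsum_congr fun n => mul_comm _ _

lemma HasIIDOffspring.integral_one_div_ncard (hN : HasIIDOffspring μ N p) (hp : ∑' m, p m = 1) :
    ∫ ω, (if (gwTree (N ω)).Finite then 1 / ((gwTree (N ω)).ncard : ℝ) else 0) ∂μ
      = ∑' n, (progenyProb p n).toReal / n := by
  simpa [div_eq_inv_mul] using
    hN.integral_gwTree_finite_eq_tsum hp (fun n => 1 / (n : ℝ)) fun n => by positivity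

end Measure

section PoissonOffspring

variable {d : ℕ} {lam : ℝ}

lemma dPoiPMF_nonneg (hlam : 0 ≤ lam) (m : ℕ) : 0 ≤ dPoiPMF d lam m := by
  unfold dPoiPMF
  split_ifs <;> positivity

lemma hasSum_dPoiPMF_mul_pow (hd : d ≠ 0) (s : ℝ) :
    HasSum (fun m => dPoiPMF d lam m * s ^ m) (Real.exp (lam * (s ^ d - 1))) := by
  have hinj : Function.Injective (d * ·) := fun _ _ h => Nat.eq_of_mul_eq_mul_left
    (Nat.pos_of_ne_zero hd) h
  refine (hinj.hasSum_iff fun m hm => ?_).1 ?_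
  · rw [dPoiPMF, if_neg fun ⟨j, hj⟩ => hm ⟨j, hj.symm⟩, zero_mul]
  · have hexp := (NormedSpace.expSeries_div_hasSum_exp (lam * s ^ d)).mul_left (Real.exp (-lam))
    rw [← Real.exp_eq_exp_ℝ, ← Real.exp_add, show -lam + lam * s ^ d = lam * (s ^ d - 1) by ring]
      at hexp
    refine hexp.congr_fun fun j => ?_
    simp only [Function.comp, dPoiPMF, dvd_mul_right, if_true,
      Nat.mul_div_cancel_left j (Nat.pos_of_ne_zero hd), pow_mul', mul_pow]
    ring

noncomputable def dPoiLaw (d : ℕ) (lam : ℝ) (m : ℕ) : ℝ≥0∞ := ENNReal.ofReal (dPoiPMF d lam m)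

lemma offspringGen_dPoiLaw (hd : d ≠ 0) (hlam : 0 ≤ lam) {s : ℝ} (hs : 0 ≤ s) :
    offspringGen (dPoiLaw d lam) (ENNReal.ofReal s)
      = ENNReal.ofReal (Real.exp (lam * (s ^ d - 1))) := by
  rw [← (hasSum_dPoiPMF_mul_pow hd s).tsum_eq, ENNReal.ofReal_tsum_of_nonneg
    (fun m => mul_nonneg (dPoiPMF_nonneg hlam m) (pow_nonneg hs m))
    (hasSum_dPoiPMF_mul_pow hd s).summable]
  exact tsum_congr fun m => by
    rw [ENNReal.ofReal_mul (dPoiPMF_nonneg hlam m), ENNReal.ofReal_pow hs, dPoiLaw]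

lemma tsum_dPoiLaw (hd : d ≠ 0) (hlam : 0 ≤ lam) : ∑' m, dPoiLaw d lam m = 1 := by
  simpa [offspringGen] using offspringGen_dPoiLaw hd hlam zero_le_one

end PoissonOffspring

section PowerSeries

variable {c : ℕ → ℝ}

lemma continuousOn_tsum_mul_pow (hc : Summable fun n => |c n|) :
    ContinuousOn (fun x => ∑' n, c n * x ^ n) (Set.Icc (-1) 1) := by
  refine continuousOn_tsum (fun n => (continuous_const.mul (continuous_pow n)).continuousOn) hc
    fun n x hx => ?_
  rw [norm_mul, norm_pow, Real.norm_eq_abs, Real.norm_eq_abs]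
  exact mul_le_of_le_one_right (abs_nonneg _) (pow_le_one₀ (abs_nonneg x) (abs_le.2 hx))

lemma summable_natCast_mul_pow_sub_one {r : ℝ} (hr0 : 0 ≤ r) (hr1 : r < 1) :
    Summable fun n : ℕ => (n : ℝ) * r ^ (n - 1) := by
  refine (summable_nat_add_iff 1).1 ?_
  have hr : ‖r‖ < 1 := by rwa [Real.norm_of_nonneg hr0]
  simpa [add_mul] using (summable_pow_mul_geometric_of_norm_lt_one 1 hr).add
    (summable_geometric_of_lt_one hr0 hr1)

lemma hasDerivAt_tsum_mul_pow {C : ℝ} (hc : ∀ n, |c n| ≤ C) {x : ℝ} (hx : |x| < 1) :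
    HasDerivAt (fun y => ∑' n, c n * y ^ n) (∑' n, c n * (n * x ^ (n - 1))) x := by
  obtain ⟨r, hxr, hr1⟩ := exists_between hx
  have hr0 : 0 ≤ r := (abs_nonneg x).trans hxr.le
  have hC : 0 ≤ C := (abs_nonneg _).trans (hc 0)
  have hmem : x ∈ Set.Ioo (-r) r := abs_lt.1 hxr
  refine hasDerivAt_tsum_of_isPreconnected
    ((summable_natCast_mul_pow_sub_one hr0 hr1).mul_left C) isOpen_Ioo isPreconnected_Ioo
    (fun n y _ => (hasDerivAt_pow n y).const_mul (c n)) (fun n y hy => ?_) hmem ?_ hmem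
  · rw [norm_mul, norm_mul, norm_pow, Real.norm_eq_abs, Real.norm_natCast, Real.norm_eq_abs]
    gcongr
    · exact hc n
    · exact (abs_lt.2 hy).le
  · refine Summable.of_norm_bounded ((summable_geometric_of_lt_one (abs_nonneg x) hx).mul_left C)
      fun n => ?_
    rw [norm_mul, norm_pow, Real.norm_eq_abs, Real.norm_eq_abs]
    gcongr
    exact hc n

end PowerSeries

lemma integral_eq_sub_of_hasDerivAt_of_nonneg {f g : ℝ → ℝ} {a b : ℝ} (hab : a ≤ b)
    (hf : ContinuousOn f (Set.Icc a b)) (hderiv : ∀ x ∈ Set.Ioo a b, HasDerivAt f (g x) x)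
    (hg : ∀ x ∈ Set.Ioo a b, 0 ≤ g x) : ∫ x in a..b, g x = f b - f a := by
  refine intervalIntegral.integral_eq_sub_of_hasDerivAt_of_le hab hf hderiv ?_
  exact intervalIntegral.intervalIntegrable_deriv_of_nonneg (by rwa [Set.uIcc_of_le hab])
    (by simpa [hab] using hderiv) (by simpa [hab] using hg)

section Coefficients

variable {a : ℕ → ℝ}

lemma div_natCast_le_self {x : ℝ} (hx : 0 ≤ x) (n : ℕ) : x / n ≤ x := by
  rcases n with _ | n
  · simpa using hx
  · exact div_le_self hx (by simp)

lemma integral_tsum_mul_pow_div (ha0 : ∀ n, 0 ≤ a n) (ha : Summable a) (ha_zero : a 0 = 0) :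
    ∫ t in (0 : ℝ)..1, (∑' n, a n * t ^ n) / t = ∑' n, a n / n := by
  have hbound : ∀ n, |a n / n| ≤ ∑' n, a n := fun n => by
    rw [abs_of_nonneg (div_nonneg (ha0 n) n.cast_nonneg)]
    exact (div_natCast_le_self (ha0 n) n).trans (ha.le_tsum n fun j _ => ha0 j)
  have hsum : Summable fun n => |a n / n| := by
    refine Summable.of_nonneg_of_le (fun n => abs_nonneg _) (fun n => ?_) ha
    rw [abs_of_nonneg (div_nonneg (ha0 n) n.cast_nonneg)]
    exact div_natCast_le_self (ha0 n) n
  rw [integral_eq_sub_of_hasDerivAt_of_nonneg (f := fun x => ∑' n, a n / n * x ^ n) zero_le_one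
    ((continuousOn_tsum_mul_pow hsum).mono (Set.Icc_subset_Icc_left (by norm_num)))
    (fun x hx => ?_) (fun x hx => div_nonneg
      (tsum_nonneg fun n => mul_nonneg (ha0 n) (pow_nonneg hx.1.le n)) hx.1.le)]
  · simp only [one_pow, mul_one, sub_eq_self]
    rw [tsum_eq_single 0 fun n hn => by simp [hn]]
    simp
  · convert hasDerivAt_tsum_mul_pow hbound (abs_lt.2 ⟨by linarith [hx.1], hx.2⟩) using 1
    rw [← tsum_div_const]
    refine tsum_congr fun n => ?_
    rcases n with _ | n
    · simp [ha_zero]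
    · field_simp [hx.1.ne']
      simp [pow_succ]
      ring

/-- Differentiating `G(y) = y e^{λ(G(y)^d - 1)}` gives `(1 - λ d G^d) G' = G / x`. -/
lemma hasDerivAt_sub_mul_pow_of_eq_mul_exp {G : ℝ → ℝ} {G' x lam : ℝ} {d : ℕ}
    (hG : HasDerivAt G G' x) (hfix : ∀ᶠ y in nhds x, G y = y * Real.exp (lam * (G y ^ d - 1)))
    (hx : x ≠ 0) :
    HasDerivAt (fun y => G y - lam * (d / (d + 1)) * G y ^ (d + 1)) (G x / x) x := by
  set E := Real.exp (lam * (G x ^ d - 1))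
  have hR := (hasDerivAt_id x).mul (((hG.pow d).sub_const 1).const_mul lam).exp
  have hG' := hG.unique (hR.congr_of_eventuallyEq hfix)
  have hGx : G x = x * E := hfix.self_of_nhds
  have hpow : x * E * (d * G x ^ (d - 1)) = d * G x ^ d := by
    rw [← hGx]
    rcases d with _ | d
    · simp
    · rw [Nat.add_sub_cancel, pow_succ]
      ring
  refine (hG.sub ((hG.pow (d + 1)).const_mul (lam * (d / (d + 1))))).congr_deriv ?_
  simp only [Pi.pow_apply, id, one_mul] at hG'
  have hd1 : (d : ℝ) + 1 ≠ 0 := by positivity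
  rw [hGx, mul_div_cancel_left₀ _ hx, Nat.add_sub_cancel, Nat.cast_add_one, ← hGx,
    show lam * (d / (d + 1)) * ((d + 1) * G x ^ d * G') = lam * d * G x ^ d * G' by field_simp]
  linear_combination hG' + lam * G' * hpow

lemma integral_tsum_mul_pow_div_of_eq_mul_exp (ha0 : ∀ n, 0 ≤ a n) (ha : Summable a)
    (ha_zero : a 0 = 0) {d : ℕ} {lam : ℝ}
    (hfix : ∀ x ∈ Set.Icc (0 : ℝ) 1,
      ∑' n, a n * x ^ n = x * Real.exp (lam * ((∑' n, a n * x ^ n) ^ d - 1))) :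
    ∫ t in (0 : ℝ)..1, (∑' n, a n * t ^ n) / t
      = ∑' n, a n - lam * (d / (d + 1)) * (∑' n, a n) ^ (d + 1) := by
  have hbound : ∀ n, |a n| ≤ ∑' n, a n := fun n => by
    rw [abs_of_nonneg (ha0 n)]
    exact ha.le_tsum n fun j _ => ha0 j
  have hcont := (continuousOn_tsum_mul_pow (c := a)
    (by simpa [abs_of_nonneg (ha0 _)] using ha)).mono
    (Set.Icc_subset_Icc_left (by norm_num : (-1 : ℝ) ≤ 0))
  have hG0 : ∑' n, a n * (0 : ℝ) ^ n = 0 := by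
    rw [tsum_eq_single 0 fun n hn => by simp [hn]]
    simp [ha_zero]
  rw [integral_eq_sub_of_hasDerivAt_of_nonneg
    (f := fun x => ∑' n, a n * x ^ n - lam * (d / (d + 1)) * (∑' n, a n * x ^ n) ^ (d + 1))
    zero_le_one (hcont.sub (continuousOn_const.mul (hcont.pow (d + 1)))) (fun x hx => ?_)
    (fun x hx => div_nonneg
      (tsum_nonneg fun n => mul_nonneg (ha0 n) (pow_nonneg hx.1.le n)) hx.1.le)]
  · simp [hG0]
  · refine hasDerivAt_sub_mul_pow_of_eq_mul_exp
      (hasDerivAt_tsum_mul_pow hbound (abs_lt.2 ⟨by linarith [hx.1], hx.2⟩)) ?_ hx.1.ne'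
    filter_upwards [Icc_mem_nhds hx.1 hx.2] with y hy using hfix y hy

end Coefficients

section PoissonProcess

variable {d : ℕ} {lam : ℝ} {Ω : Type*} [MeasurableSpace Ω] {μ : Measure Ω}
  [IsProbabilityMeasure μ] {N : Ω → List ℕ → ℕ}

lemma hasIIDOffspring_dPoiLaw (hlam : 0 ≤ lam)
    (hiid : ∀ (s : Finset (List ℕ)) (κ : List ℕ → ℕ),
      (μ {ω | ∀ l ∈ s, N ω l = κ l}).toReal = ∏ l ∈ s, dPoiPMF d lam (κ l)) :
    HasIIDOffspring μ N (dPoiLaw d lam) := fun s κ => by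
  rw [← ENNReal.ofReal_toReal (measure_ne_top μ _), hiid,
    ENNReal.ofReal_prod_of_nonneg fun l _ => dPoiPMF_nonneg hlam _]
  rfl

variable (hd : d ≠ 0) (hlam : 0 ≤ lam) (hN : HasIIDOffspring μ N (dPoiLaw d lam))
include hd hlam hN

lemma tsum_progenyProb_mul_pow_eq_mul_exp {x : ℝ} (hx : x ∈ Set.Icc (0 : ℝ) 1) :
    ∑' n, (progenyProb (dPoiLaw d lam) n).toReal * x ^ n
      = x * Real.exp (lam * ((∑' n, (progenyProb (dPoiLaw d lam) n).toReal * x ^ n) ^ d - 1)) := by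
  have hfin := hN.progenyGen_one_ne_top (tsum_dPoiLaw hd hlam)
  have h := progenyGen_eq (dPoiLaw d lam) (ENNReal.ofReal x)
  have hG0 : 0 ≤ ∑' n, (progenyProb (dPoiLaw d lam) n).toReal * x ^ n :=
    tsum_nonneg fun n => mul_nonneg ENNReal.toReal_nonneg (pow_nonneg hx.1 n)
  rw [progenyGen_ofReal hfin hx.1 hx.2, offspringGen_dPoiLaw hd hlam hG0,
    ← ENNReal.ofReal_mul hx.1] at h
  exact (ENNReal.ofReal_eq_ofReal_iff hG0 (mul_nonneg hx.1 (Real.exp_pos _).le)).1 h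

lemma toReal_measure_setOf_gwTree_finite :
    (μ {ω | (gwTree (N ω)).Finite}).toReal = ∑' n, (progenyProb (dPoiLaw d lam) n).toReal := by
  have hp := tsum_dPoiLaw hd hlam
  rw [hN.measure_setOf_gwTree_finite hp, ← ENNReal.ofReal_one,
    progenyGen_ofReal (hN.progenyGen_one_ne_top hp) zero_le_one le_rfl,
    ENNReal.toReal_ofReal (tsum_nonneg fun n => by positivity)]
  simp

lemma gammaLam_eq_tsum_progenyProb :
    gammaLam d lam = ∑' n, (progenyProb (dPoiLaw d lam) n).toReal := by
  have hp := tsum_dPoiLaw hd hlam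
  have hfix := tsum_progenyProb_mul_pow_eq_mul_exp hd hlam hN (x := 1) ⟨zero_le_one, le_rfl⟩
  simp only [one_pow, mul_one, one_mul] at hfix
  refine IsLeast.csInf_eq ⟨⟨⟨tsum_nonneg fun n => by positivity, ?_⟩, ?_⟩, ?_⟩
  · rw [← toReal_measure_setOf_gwTree_finite hd hlam hN]
    exact ENNReal.toReal_le_of_le_ofReal zero_le_one (by simpa using prob_le_one)
  · rwa [show -lam * (1 - (∑' n, (progenyProb (dPoiLaw d lam) n).toReal) ^ d)
      = lam * ((∑' n, (progenyProb (dPoiLaw d lam) n).toReal) ^ d - 1) by ring]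
  · rintro b ⟨hb, hbfix⟩
    rw [show -lam * (1 - b ^ d) = lam * (b ^ d - 1) by ring] at hbfix
    have hle := progenyGen_one_le (dPoiLaw d lam) (s := ENNReal.ofReal b)
      (by rw [offspringGen_dPoiLaw hd hlam hb.1, ← hbfix])
    rw [← ENNReal.ofReal_one, progenyGen_ofReal (hN.progenyGen_one_ne_top hp) zero_le_one le_rfl,
      ENNReal.ofReal_le_ofReal_iff hb.1] at hle
    simpa using hle

end PoissonProcess

end GaltonWatson

open GaltonWatson in
/-- total progeny of the `d·Poi(lam)` branching process.
Let `C` be the total progeny of a Galton–Watson process with offspring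
distribution `d · Poi(lam)` (realized by an i.i.d. family `N` of offspring
numbers), with `1/C = 0` when `C = ∞`, and let
`γ = P(C < ∞)` be the extinction probability.  Then `γ` is the smallest
solution in `[0,1]` of `γ = exp(-lam (1 - γ^d))`,
`E[1/C] = γ - lam·(d/(d+1))·γ^{d+1}`, the restricted generating function
`G(z) = E[z^C · 1_{C<∞}]` satisfies `G(z) = z · exp(lam (G(z)^d - 1))` on
`[0,1]`, and `E[1/C] = ∫_0^1 G(t)/t dt`. -/
theorem gw_total_progeny_inverse_moment
    (d : ℕ) (hd : 1 ≤ d) (lam : ℝ) (hlam : 0 < lam)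
    {Ω : Type*} [MeasurableSpace Ω] (μ : Measure Ω) [IsProbabilityMeasure μ]
    (N : Ω → List ℕ → ℕ)
    (hiid : ∀ (s : Finset (List ℕ)) (κ : List ℕ → ℕ),
      (μ {ω | ∀ l ∈ s, N ω l = κ l}).toReal = ∏ l ∈ s, dPoiPMF d lam (κ l)) :
    (μ {ω | (gwTree (N ω)).Finite}).toReal = gammaLam d lam ∧
    (∫ ω, (if (gwTree (N ω)).Finite then
        1 / ((gwTree (N ω)).ncard : ℝ) else 0) ∂μ)
      = gammaLam d lam -
          lam * ((d : ℝ) / ((d : ℝ) + 1)) * gammaLam d lam ^ (d + 1) ∧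
    (∀ z ∈ Set.Icc (0 : ℝ) 1,
      gwGen μ N z = z * Real.exp (lam * (gwGen μ N z ^ d - 1))) ∧
    (∫ ω, (if (gwTree (N ω)).Finite then
        1 / ((gwTree (N ω)).ncard : ℝ) else 0) ∂μ)
      = ∫ t in (0 : ℝ)..1, gwGen μ N t / t := by
  have hd0 : d ≠ 0 := Nat.one_le_iff_ne_zero.1 hd
  have hN := hasIIDOffspring_dPoiLaw hlam.le hiid
  have hp := tsum_dPoiLaw hd0 hlam.le
  set a : ℕ → ℝ := fun n => (progenyProb (dPoiLaw d lam) n).toReal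
  have ha : Summable a := summable_toReal_progenyProb (hN.progenyGen_one_ne_top hp)
  have ha0 : ∀ n, 0 ≤ a n := fun n => ENNReal.toReal_nonneg
  have ha_zero : a 0 = 0 := by simp [a, progenyProb_zero]
  have hfix := fun x hx => tsum_progenyProb_mul_pow_eq_mul_exp hd0 hlam.le hN (x := x) hx
  have hγ := gammaLam_eq_tsum_progenyProb hd0 hlam.le hN
  refine ⟨hγ ▸ toReal_measure_setOf_gwTree_finite hd0 hlam.le hN, ?_, fun z hz => ?_, ?_⟩
  · rw [hN.integral_one_div_ncard hp, hγ, ← integral_tsum_mul_pow_div ha0 ha ha_zero,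
      integral_tsum_mul_pow_div_of_eq_mul_exp ha0 ha ha_zero hfix]
  · rw [hN.gwGen_eq_tsum hp hz.1]
    exact hfix z hz
  · rw [hN.integral_one_div_ncard hp, ← integral_tsum_mul_pow_div ha0 ha ha_zero]
    refine intervalIntegral.integral_congr fun t ht => ?_
    rw [Set.uIcc_of_le zero_le_one] at ht
    rw [hN.gwGen_eq_tsum hp ht.1]

end RSC
end
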